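/- arXiv:1801.07044 — 4 statements merged into one kernel-verified Lean document; each statement's English description precedes it below -/
import Mathlib

section
/- The squared Bessel transition densities satisfy the symmetry p_δ(y, T; x) = p_{4-δ}(x, T; y), where p_δ(y, T; x) = (1/(2T))(y/x)^{(δ/2-1)/2} exp(-(x+y)/(2T)) I_{|δ/2-1|}(√(xy)/T) with the Bessel index 1 - δ/2 for δ < 2 (absorbing) and δ/2 - 1 for δ > 2. -/
open MeasureTheory

/-- Modified Bessel function of the first kind `I_ν(x)` (series definition). -/
noncomputable def besselI (ν x : ℝ) : ℝ :=
  ∑' k : ℕ, (x / 2) ^ (2 * (k : ℝ) + ν) / ((k.factorial : ℝ) * Real.Gamma ((k : ℝ) + ν + 1))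

/-- The squared Bessel transition density of dimension `δ` over time `T`, from `x` to `y`,
with Bessel index `1 - δ/2` for `δ ≤ 2` (absorbing boundary, norm-decreasing part)
and `δ/2 - 1` for `δ > 2`; i.e. index `|δ/2 - 1|`. -/
noncomputable def besqDensity (δ y T x : ℝ) : ℝ :=
  (1 / (2 * T)) * (y / x) ^ ((1 / 2) * (δ / 2 - 1)) * Real.exp (-(x + y) / (2 * T)) *
    besselI |δ / 2 - 1| (Real.sqrt (x * y) / T)

/-- The noncentral chi-squared density with `k` degrees of freedom and
noncentrality parameter `lam`, evaluated at `z` (Poisson mixture of central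
chi-squared densities). -/
noncomputable def ncChiSqPDF (k lam z : ℝ) : ℝ :=
  ∑' j : ℕ, (Real.exp (-lam / 2) * (lam / 2) ^ j / (j.factorial : ℝ)) *
    (z ^ (k / 2 + (j : ℝ) - 1) * Real.exp (-z / 2) /
      (2 ^ (k / 2 + (j : ℝ)) * Real.Gamma (k / 2 + (j : ℝ))))

/-- The noncentral chi-squared CDF `χ'²(z; k, lam)`. -/
noncomputable def ncChiSqCDF (z k lam : ℝ) : ℝ :=
  ∫ y in (0 : ℝ)..z, ncChiSqPDF k lam y

/-- Symmetry of the squared Bessel transition densities: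
`p_δ(y, T; x) = p_{4-δ}(x, T; y)` for `x, y, T > 0`. -/
theorem stmt8 (δ x y T : ℝ) (hx : 0 < x) (hy : 0 < y) (hT : 0 < T) :
    besqDensity δ y T x = besqDensity (4 - δ) x T y := by
  unfold besqDensity
  have hxy : (0:ℝ) < x / y := div_pos hx hy
  have h1 : |(4 - δ) / 2 - 1| = |δ / 2 - 1| := by
    rw [abs_sub_comm]; ring_nf
  have h2 : (x / y) ^ ((1 / 2) * ((4 - δ) / 2 - 1)) = (y / x) ^ ((1 / 2) * (δ / 2 - 1)) := by
    have : (1 / 2 : ℝ) * ((4 - δ) / 2 - 1) = -((1/2) * (δ/2 - 1)) := by ring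
    rw [this, Real.rpow_neg hxy.le, ← Real.inv_rpow hxy.le, inv_div]
  rw [h1, h2, mul_comm y x, add_comm y x]
end

section
/- For a squared Bessel process of dimension δ > 2 started at x > 0, the expectation of X_T^{1-δ/2} equals x^{1-δ/2} times the probability that a noncentral chi-squared variable with δ-2 degrees of freedom and noncentrality x/T is positive evaluated at zero, i.e., E[X_T^{1-δ/2}] = x^{1-δ/2} · χ'²(x/T; δ-2, 0), and this is strictly less than x^{1-δ/2}; hence Z_t = X_t^{1-δ/2} is a strict local martingale. -/
open MeasureTheory

namespace Stmt10Aux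

open Real Set Filter

lemma iint {s : ℝ} (hs : -1 < s) (A B : ℝ) :
    IntervalIntegrable (fun t : ℝ => t ^ s * Real.exp (-t)) volume A B :=
  (intervalIntegral.intervalIntegrable_rpow' hs).mul_continuousOn
    (Continuous.continuousOn (by continuity))

lemma gamma_rec {μ a : ℝ} (hμ : 0 < μ) (ha : 0 < a) :
    μ * ∫ t in (0:ℝ)..a, t ^ (μ-1) * Real.exp (-t)
      = a ^ μ * Real.exp (-a) + ∫ t in (0:ℝ)..a, t ^ μ * Real.exp (-t) := by
  have h1 : ∫ t in (0:ℝ)..a, (μ * (t ^ (μ-1) * Real.exp (-t)) - t ^ μ * Real.exp (-t))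
      = a ^ μ * Real.exp (-a) := by
    have key := intervalIntegral.integral_eq_sub_of_hasDeriv_right_of_le
      (f := fun t : ℝ => t ^ μ * Real.exp (-t))
      (f' := fun t : ℝ => μ * (t ^ (μ-1) * Real.exp (-t)) - t ^ μ * Real.exp (-t))
      ha.le ?_ ?_ ?_
    · rw [key]; simp [Real.zero_rpow hμ.ne']
    · apply ContinuousOn.mul _ (Continuous.continuousOn (by continuity))
      intro t _
      exact (Real.continuousAt_rpow_const t μ (Or.inr hμ.le)).continuousWithinAt
    · intro t ht
      have h1 : HasDerivAt (fun t : ℝ => t ^ μ) (μ * t ^ (μ-1)) t :=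
        Real.hasDerivAt_rpow_const (Or.inl ht.1.ne')
      have h2 : HasDerivAt (fun t : ℝ => Real.exp (-t)) (-Real.exp (-t)) t := by
        simpa using ((hasDerivAt_id t).neg).exp
      have := h1.mul h2
      refine (HasDerivAt.hasDerivWithinAt ?_)
      exact this.congr_deriv (by beta_reduce; ring)
    · exact ((iint (by linarith) 0 a).const_mul μ).sub (iint (by linarith) 0 a)
  rw [← h1, intervalIntegral.integral_sub (((iint (by linarith) 0 a).const_mul μ))
      (iint (by linarith) 0 a), intervalIntegral.integral_const_mul]
  ring

lemma summable_b {ν : ℝ} (hν : 0 < ν) {a : ℝ} (ha : 0 ≤ a) :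
    Summable (fun k : ℕ => a ^ k / Real.Gamma (ν + k + 1)) := by
  have hg : ∀ k : ℕ, 0 < Real.Gamma (ν + k + 1) := fun k =>
    Real.Gamma_pos_of_pos (by positivity)
  apply summable_of_ratio_norm_eventually_le (r := 1/2) (by norm_num)
  filter_upwards [Filter.eventually_ge_atTop (Nat.ceil (2*a))] with n hn
  have hn' : 2 * a ≤ (n:ℝ) := le_trans (Nat.le_ceil _) (by exact_mod_cast hn)
  have hgrec : Real.Gamma (ν + (n+1:ℕ) + 1) = (ν + n + 1) * Real.Gamma (ν + n + 1) := by
    push_cast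
    rw [show ν + ((n:ℝ)+1) + 1 = (ν + n + 1) + 1 by ring, Real.Gamma_add_one (by positivity)]
  rw [Real.norm_of_nonneg (by positivity), Real.norm_of_nonneg (by positivity), hgrec,
    pow_succ]
  have h2 : a ^ n * a / ((ν + ↑n + 1) * Real.Gamma (ν + ↑n + 1))
      = (a / (ν + n + 1)) * (a ^ n / Real.Gamma (ν + ↑n + 1)) := by
    rw [div_mul_div_comm]; ring_nf
  rw [h2]
  have h3 : a / (ν + n + 1) ≤ 1/2 := by
    rw [div_le_div_iff₀ (by positivity) (by norm_num)]
    linarith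
  exact mul_le_mul_of_nonneg_right h3 (by positivity)

lemma gamma_partial {ν : ℝ} (hν : 0 < ν) {a : ℝ} (ha : 0 < a) (n : ℕ) :
    ∫ t in (0:ℝ)..a, t ^ (ν-1) * Real.exp (-t)
      = Real.Gamma ν * Real.exp (-a) * (a ^ ν * ∑ k ∈ Finset.range n, a ^ k / Real.Gamma (ν + k + 1))
        + (Real.Gamma ν / Real.Gamma (ν + n)) * ∫ t in (0:ℝ)..a, t ^ (ν + n - 1) * Real.exp (-t) := by
  induction n with
  | zero =>
    simp [Real.Gamma_pos_of_pos hν, div_self (Real.Gamma_pos_of_pos hν).ne']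
  | succ n ih =>
    rw [ih]
    have hpos : (0:ℝ) < ν + n := by positivity
    have hrec := gamma_rec (μ := ν + n) hpos ha
    have hγ : ∫ t in (0:ℝ)..a, t ^ (ν + n - 1) * Real.exp (-t)
        = (a ^ (ν+(n:ℝ)) * Real.exp (-a) + ∫ t in (0:ℝ)..a, t ^ (ν + (n:ℝ)) * Real.exp (-t)) / (ν + n) := by
      field_simp
      linarith [hrec]
    rw [hγ]
    have hG1 : Real.Gamma (ν + (n+1:ℕ)) = (ν + n) * Real.Gamma (ν + n) := by
      push_cast
      rw [show ν + ((n:ℝ)+1) = (ν + n) + 1 by ring, Real.Gamma_add_one hpos.ne']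
    have hGpos : (0:ℝ) < Real.Gamma (ν + n) := Real.Gamma_pos_of_pos hpos
    have hexp : (ν + ((n:ℕ):ℝ) + 1 - 1 : ℝ) = ν + (n:ℝ) := by ring
    have hint : ∫ t in (0:ℝ)..a, t ^ (ν + ((n+1:ℕ):ℝ) - 1) * Real.exp (-t)
        = ∫ t in (0:ℝ)..a, t ^ (ν + (n:ℝ)) * Real.exp (-t) := by
      push_cast; ring_nf
    have hG2 : Real.Gamma (ν + (n:ℝ) + 1) = (ν + n) * Real.Gamma (ν + n) := by
      rw [show ν + (n:ℝ) + 1 = (ν + n) + 1 by ring, Real.Gamma_add_one hpos.ne']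
    rw [Finset.sum_range_succ, hint, hG1, hG2]
    have hapow : a ^ ν * a ^ n = a ^ (ν + (n:ℝ)) := by
      rw [Real.rpow_add ha, Real.rpow_natCast]
    field_simp
    ring_nf
    rw [← hapow]
    ring

lemma gamma_series {ν : ℝ} (hν : 0 < ν) {a : ℝ} (ha : 0 < a) :
    ∫ t in (0:ℝ)..a, t ^ (ν-1) * Real.exp (-t)
      = Real.Gamma ν * Real.exp (-a) * (a ^ ν * ∑' k : ℕ, a ^ k / Real.Gamma (ν + k + 1)) := by
  have hsum := summable_b hν ha.le
  have hG := Real.Gamma_pos_of_pos hν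
  -- remainder tends to 0
  have hrem : Tendsto (fun n : ℕ => (Real.Gamma ν / Real.Gamma (ν + n)) *
      ∫ t in (0:ℝ)..a, t ^ (ν + n - 1) * Real.exp (-t)) atTop (nhds 0) := by
    have hb0 : Tendsto (fun n : ℕ => Real.Gamma ν * a ^ ν * (a ^ n / Real.Gamma (ν + n + 1)))
        atTop (nhds 0) := by
      simpa using (hsum.tendsto_atTop_zero.const_mul (Real.Gamma ν * a ^ ν))
    apply squeeze_zero (fun n => ?_) (fun n => ?_) hb0
    · have hpos : (0:ℝ) < ν + n := by positivity
      apply mul_nonneg (by positivity)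
      apply intervalIntegral.integral_nonneg ha.le
      intro t ht
      exact mul_nonneg (Real.rpow_nonneg ht.1 _) (Real.exp_nonneg _)
    · have hpos : (0:ℝ) < ν + n := by positivity
      have hGn := Real.Gamma_pos_of_pos hpos
      have hbound : ∫ t in (0:ℝ)..a, t ^ (ν + n - 1) * Real.exp (-t)
          ≤ a ^ (ν + (n:ℝ)) / (ν + n) := by
        have h1 : ∫ t in (0:ℝ)..a, t ^ (ν + n - 1) * Real.exp (-t)
            ≤ ∫ t in (0:ℝ)..a, t ^ (ν + n - 1) := by
          apply intervalIntegral.integral_mono_on ha.le (iint (by linarith) 0 a)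
            (intervalIntegral.intervalIntegrable_rpow' (by linarith))
          intro t ht
          calc t ^ (ν + ↑n - 1) * Real.exp (-t) ≤ t ^ (ν + ↑n - 1) * 1 :=
              mul_le_mul_of_nonneg_left (Real.exp_le_one_iff.mpr (by linarith [ht.1]))
                (Real.rpow_nonneg ht.1 _)
            _ = t ^ (ν + ↑n - 1) := mul_one _
        have h2 : ∫ t in (0:ℝ)..a, t ^ (ν + n - 1) = a ^ (ν + (n:ℝ)) / (ν + n) := by
          rw [integral_rpow (Or.inl (by linarith))]
          rw [show ν + ↑n - 1 + 1 = ν + (n:ℝ) by ring, Real.zero_rpow (by positivity)]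
          ring
        linarith
      have hstep : (Real.Gamma ν / Real.Gamma (ν + n)) * (a ^ (ν + (n:ℝ)) / (ν + n))
          = Real.Gamma ν * a ^ ν * (a ^ n / Real.Gamma (ν + n + 1)) := by
        rw [show ν + (n:ℝ) + 1 = (ν + n) + 1 by ring, Real.Gamma_add_one hpos.ne',
          Real.rpow_add ha, Real.rpow_natCast]
        field_simp
      calc (Real.Gamma ν / Real.Gamma (ν + n)) * ∫ t in (0:ℝ)..a, t ^ (ν + n - 1) * Real.exp (-t)
          ≤ (Real.Gamma ν / Real.Gamma (ν + n)) * (a ^ (ν + (n:ℝ)) / (ν + n)) := by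
            apply mul_le_mul_of_nonneg_left hbound (by positivity)
        _ = Real.Gamma ν * a ^ ν * (a ^ n / Real.Gamma (ν + n + 1)) := hstep
  have hmain : Tendsto (fun n : ℕ =>
      Real.Gamma ν * Real.exp (-a) * (a ^ ν * ∑ k ∈ Finset.range n, a ^ k / Real.Gamma (ν + k + 1))
        + (Real.Gamma ν / Real.Gamma (ν + n)) * ∫ t in (0:ℝ)..a, t ^ (ν + n - 1) * Real.exp (-t))
      atTop (nhds (Real.Gamma ν * Real.exp (-a) * (a ^ ν * ∑' k : ℕ, a ^ k / Real.Gamma (ν + k + 1)) + 0)) := by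
    apply Tendsto.add _ hrem
    exact (hsum.hasSum.tendsto_sum_nat.const_mul _).const_mul _
  have := hmain.congr' (Eventually.of_forall (fun n => (gamma_partial hν ha n).symm))
  rw [add_zero] at this
  exact tendsto_nhds_unique tendsto_const_nhds this

lemma gamma_lt {ν : ℝ} (hν : 0 < ν) {a : ℝ} (ha : 0 < a) :
    ∫ t in (0:ℝ)..a, t ^ (ν-1) * Real.exp (-t) < Real.Gamma ν := by
  have hint : IntegrableOn (fun t : ℝ => Real.exp (-t) * t ^ (ν-1)) (Ioi 0) :=
    Real.GammaIntegral_convergent hν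
  have hγ : ∫ t in (0:ℝ)..a, t ^ (ν-1) * Real.exp (-t)
      = ∫ t in Ioc 0 a, Real.exp (-t) * t ^ (ν-1) := by
    rw [intervalIntegral.integral_of_le ha.le]
    exact setIntegral_congr_fun measurableSet_Ioc (fun t _ => mul_comm _ _)
  have hunion : Ioc (0:ℝ) a ∪ Ioi a = Ioi 0 := Ioc_union_Ioi_eq_Ioi ha.le
  have hdisj : Disjoint (Ioc (0:ℝ) a) (Ioi a) := Ioc_disjoint_Ioi le_rfl
  have h1 : IntegrableOn (fun t : ℝ => Real.exp (-t) * t ^ (ν-1)) (Ioc 0 a) :=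
    hint.mono_set (fun t ht => ht.1)
  have h2 : IntegrableOn (fun t : ℝ => Real.exp (-t) * t ^ (ν-1)) (Ioi a) :=
    hint.mono_set (fun t ht => lt_trans ha ht)
  have hsplit : Real.Gamma ν
      = (∫ t in Ioc 0 a, Real.exp (-t) * t ^ (ν-1)) + ∫ t in Ioi a, Real.exp (-t) * t ^ (ν-1) := by
    rw [Real.Gamma_eq_integral hν, ← hunion, setIntegral_union hdisj measurableSet_Ioi h1 h2]
  have hpos : 0 < ∫ t in Ioi a, Real.exp (-t) * t ^ (ν-1) := by
    rw [setIntegral_pos_iff_support_of_nonneg_ae]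
    · have hsup : (Function.support fun t : ℝ => Real.exp (-t) * t ^ (ν-1)) ∩ Ioi a = Ioi a := by
        rw [inter_eq_right]
        intro t ht
        exact mul_ne_zero (Real.exp_pos _).ne' (Real.rpow_pos_of_pos (lt_trans ha ht) _).ne'
      rw [hsup]
      simp [ha]
    · refine eventually_of_mem (self_mem_ae_restrict measurableSet_Ioi) ?_
      exact fun t ht => mul_nonneg (Real.exp_pos _).le (Real.rpow_nonneg (le_of_lt (lt_trans ha ht)) _)
    · exact h2
  rw [hγ, hsplit]
  linarith

lemma integrand_eq {δ x T : ℝ} (hδ : 2 < δ) (hx : 0 < x) (hT : 0 < T) {y : ℝ} (hy : 0 < y) :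
    y ^ (1 - δ/2) * besqDensity δ y T x
      = ∑' k : ℕ, (Real.exp (-(x/(2*T))) * x ^ k /
          ((2*T) ^ (2*(k:ℝ) + (δ/2-1) + 1) * (k.factorial : ℝ) * Real.Gamma ((k:ℝ) + (δ/2-1) + 1)))
          * (y ^ (k:ℝ) * Real.exp (-(1/(2*T) * y))) := by
  have hν : 0 < δ/2 - 1 := by linarith
  have habs : |δ/2 - 1| = δ/2 - 1 := abs_of_pos hν
  unfold besqDensity besselI
  rw [habs, ← tsum_mul_left, ← tsum_mul_left]
  apply tsum_congr
  intro k
  have h2T : (0:ℝ) < 2*T := by positivity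
  have hs : (0:ℝ) < Real.sqrt (x*y) / T / 2 := by positivity
  have hyx : (0:ℝ) < y / x := by positivity
  have hfac : (0:ℝ) < (k.factorial : ℝ) := by positivity
  have hΓ : (0:ℝ) < Real.Gamma ((k:ℝ) + (δ/2-1) + 1) := Real.Gamma_pos_of_pos (by positivity)
  have hL : 0 < y ^ (1 - δ/2) *
      (1 / (2 * T) * (y / x) ^ ((1:ℝ) / 2 * (δ / 2 - 1)) * Real.exp (-(x + y) / (2 * T)) *
        ((Real.sqrt (x * y) / T / 2) ^ (2 * (k:ℝ) + (δ / 2 - 1)) /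
          ((k.factorial : ℝ) * Real.Gamma ((k:ℝ) + (δ / 2 - 1) + 1)))) := by
    have h1 : (0:ℝ) < Real.sqrt (x*y) := Real.sqrt_pos.mpr (by positivity)
    positivity
  have hR : 0 < Real.exp (-(x/(2*T))) * x ^ k /
      ((2*T) ^ (2*(k:ℝ) + (δ/2-1) + 1) * (k.factorial : ℝ) * Real.Gamma ((k:ℝ) + (δ/2-1) + 1))
      * (y ^ (k:ℝ) * Real.exp (-(1/(2*T) * y))) := by positivity
  rw [← Real.exp_log hL, ← Real.exp_log hR]
  congr 1
  have hlogs : Real.log (Real.sqrt (x*y) / T / 2)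
      = (Real.log x + Real.log y)/2 - Real.log (2*T) := by
    rw [div_div, Real.log_div (by positivity) (by positivity),
      Real.log_sqrt (by positivity), Real.log_mul hx.ne' hy.ne',
      Real.log_mul hT.ne' (by norm_num), Real.log_mul (by norm_num) hT.ne']
    ring
  have hlogyx : Real.log (y / x) = Real.log y - Real.log x :=
    Real.log_div hy.ne' hx.ne'
  rw [← Real.rpow_natCast x k]
  repeat' first
    | rw [Real.log_mul (by positivity) (by positivity)]
    | rw [Real.log_div (by positivity) (by positivity)]
  simp only [one_div, Real.log_inv, Real.log_exp, Real.log_rpow hy, Real.log_rpow hyx,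
    Real.log_rpow hs, Real.log_rpow h2T, Real.log_rpow hx]
  have hl2T : Real.log (2*T) = Real.log 2 + Real.log T := Real.log_mul (by norm_num) hT.ne'
  rw [hlogs, hlogyx]
  simp only [hl2T, Real.log_one]
  ring

lemma pdf_eq {δ : ℝ} (hδ : 2 < δ) (z : ℝ) :
    ncChiSqPDF (δ - 2) 0 z
      = z ^ (δ/2 - 1 - 1) * Real.exp (-z/2) / (2 ^ (δ/2 - 1) * Real.Gamma (δ/2 - 1)) := by
  unfold ncChiSqPDF
  rw [tsum_eq_single 0]
  · norm_num
    rw [show (δ-2)/2 = δ/2 - 1 by ring]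
  · intro j hj
    simp [zero_pow hj]

lemma cdf_eq {δ x T : ℝ} (hδ : 2 < δ) (hx : 0 < x) (hT : 0 < T) :
    ncChiSqCDF (x/T) (δ-2) 0
      = (∫ t in (0:ℝ)..(x/(2*T)), t ^ (δ/2 - 1 - 1) * Real.exp (-t)) / Real.Gamma (δ/2-1) := by
  unfold ncChiSqCDF
  rw [intervalIntegral.integral_congr (g := fun z =>
      z ^ (δ/2 - 1 - 1) * Real.exp (-z/2) / (2 ^ ((δ:ℝ)/2 - 1) * Real.Gamma (δ/2 - 1)))
      (fun z _ => pdf_eq hδ z)]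
  have hsub := intervalIntegral.smul_integral_comp_mul_left
    (f := fun z => z ^ (δ/2 - 1 - 1) * Real.exp (-z/2)) (a := 0) (b := x/(2*T)) 2
  simp only [smul_eq_mul, mul_zero] at hsub
  rw [show (2:ℝ) * (x/(2*T)) = x/T by field_simp] at hsub
  have h2 : ∀ u ∈ uIcc (0:ℝ) (x/(2*T)), (fun u => ((2*u) ^ (δ/2 - 1 - 1) * Real.exp (-(2*u)/2))) u
      = (fun u => 2 ^ (δ/2 - 1 - 1) * (u ^ (δ/2 - 1 - 1) * Real.exp (-u))) u := by
    intro u hu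
    have hu0 : 0 ≤ u := by
      rw [uIcc_of_le (by positivity : (0:ℝ) ≤ x/(2*T))] at hu
      exact hu.1
    simp only
    rw [Real.mul_rpow (by norm_num) hu0]
    ring_nf
  rw [intervalIntegral.integral_div, ← hsub, intervalIntegral.integral_congr h2,
    intervalIntegral.integral_const_mul]
  have hΓ : (0:ℝ) < Real.Gamma (δ/2-1) := Real.Gamma_pos_of_pos (by linarith)
  have h2p : (0:ℝ) < (2:ℝ) ^ (δ/2 - 1 - 1) := by positivity
  have hsplit : (2:ℝ) ^ (δ/2 - 1) = 2 ^ (δ/2 - 1 - 1) * 2 := by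
    rw [← Real.rpow_add_one (by norm_num : (2:ℝ) ≠ 0)]
    ring_nf
  rw [div_eq_div_iff (by positivity) hΓ.ne', hsplit]
  ring

lemma intOn (k : ℕ) {r : ℝ} (hr : 0 < r) :
    IntegrableOn (fun y : ℝ => y ^ (k:ℝ) * Real.exp (-(r * y))) (Ioi 0) := by
  have := integrableOn_rpow_mul_exp_neg_mul_rpow (p := 1) (s := (k:ℝ)) (b := r)
    (lt_of_lt_of_le neg_one_lt_zero (Nat.cast_nonneg k)) zero_lt_one hr
  refine this.congr_fun (fun y hy => ?_) measurableSet_Ioi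
  simp only [Real.rpow_one, pow_one, neg_mul]

lemma intVal (k : ℕ) {r : ℝ} (hr : 0 < r) :
    ∫ y in Ioi (0:ℝ), y ^ (k:ℝ) * Real.exp (-(r * y)) = (1/r) ^ ((k:ℝ)+1) * (k.factorial : ℝ) := by
  have h := Real.integral_rpow_mul_exp_neg_mul_Ioi (a := (k:ℝ)+1) (r := r) (by positivity) hr
  simp only [add_sub_cancel_right] at h
  rw [h]
  congr 1
  rw [show ((k:ℝ)+1) = ((k:ℕ):ℝ)+1 from rfl, Real.Gamma_nat_eq_factorial]

end Stmt10Aux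

open Stmt10Aux Set Filter in
/-- For a squared Bessel process of dimension `δ > 2` started at `x > 0`,
`E[X_T^{1-δ/2}] = x^{1-δ/2} · χ'²(x/T; δ-2, 0)`, which is strictly less than
`x^{1-δ/2}`; hence `Z_t = X_t^{1-δ/2}` is a strict local martingale. -/
theorem stmt10 (δ x T : ℝ) (hδ : 2 < δ) (hx : 0 < x) (hT : 0 < T) :
    (∫ y in Set.Ioi (0 : ℝ), y ^ (1 - δ / 2) * besqDensity δ y T x) =
      x ^ (1 - δ / 2) * ncChiSqCDF (x / T) (δ - 2) 0 ∧
    x ^ (1 - δ / 2) * ncChiSqCDF (x / T) (δ - 2) 0 < x ^ (1 - δ / 2) := by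
  have hν : 0 < δ/2 - 1 := by linarith
  have h2T : (0:ℝ) < 2*T := by positivity
  have ha : 0 < x/(2*T) := by positivity
  have hΓν : 0 < Real.Gamma (δ/2-1) := Real.Gamma_pos_of_pos hν
  -- the CDF equals the normalized incomplete gamma function
  have hcdf : ncChiSqCDF (x/T) (δ-2) 0
      = (∫ t in (0:ℝ)..(x/(2*T)), t ^ (δ/2 - 1 - 1) * Real.exp (-t)) / Real.Gamma (δ/2-1) :=
    cdf_eq hδ hx hT
  have hlt : (∫ t in (0:ℝ)..(x/(2*T)), t ^ (δ/2 - 1 - 1) * Real.exp (-t)) < Real.Gamma (δ/2-1) :=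
    gamma_lt hν ha
  have hxpow : (0:ℝ) < x ^ (1 - δ/2) := Real.rpow_pos_of_pos hx _
  have hint_nonneg : 0 ≤ ∫ t in (0:ℝ)..(x/(2*T)), t ^ (δ/2 - 1 - 1) * Real.exp (-t) := by
    apply intervalIntegral.integral_nonneg ha.le
    intro t ht
    exact mul_nonneg (Real.rpow_nonneg ht.1 _) (Real.exp_nonneg _)
  constructor
  · -- the main computation
    set F : ℕ → ℝ → ℝ := fun k y => (Real.exp (-(x/(2*T))) * x ^ k /
        ((2*T) ^ (2*(k:ℝ) + (δ/2-1) + 1) * (k.factorial : ℝ) * Real.Gamma ((k:ℝ) + (δ/2-1) + 1)))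
        * (y ^ (k:ℝ) * Real.exp (-(1/(2*T) * y))) with hF
    have hCpos : ∀ k : ℕ, 0 < Real.exp (-(x/(2*T))) * x ^ k /
        ((2*T) ^ (2*(k:ℝ) + (δ/2-1) + 1) * (k.factorial : ℝ) * Real.Gamma ((k:ℝ) + (δ/2-1) + 1)) := by
      intro k
      have : 0 < Real.Gamma ((k:ℝ) + (δ/2-1) + 1) := Real.Gamma_pos_of_pos (by positivity)
      positivity
    have hIntF : ∀ k : ℕ, Integrable (F k) (volume.restrict (Ioi (0:ℝ))) := by
      intro k
      exact (intOn k (by positivity : (0:ℝ) < 1/(2*T))).const_mul _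
    have hvalF : ∀ k : ℕ, ∫ y in Ioi (0:ℝ), F k y
        = (2*T) ^ (-(δ/2-1)) * Real.exp (-(x/(2*T)))
            * ((x/(2*T)) ^ k / Real.Gamma ((k:ℝ) + (δ/2-1) + 1)) := by
      intro k
      rw [hF]
      simp only
      rw [MeasureTheory.integral_const_mul, intVal k (by positivity : (0:ℝ) < 1/(2*T)), one_div_one_div]
      -- now a positive-reals identity, via logarithms
      have hΓk : 0 < Real.Gamma ((k:ℝ) + (δ/2-1) + 1) := Real.Gamma_pos_of_pos (by positivity)
      have hfac : (0:ℝ) < (k.factorial : ℝ) := by positivity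
      have hL : 0 < Real.exp (-(x/(2*T))) * x ^ k /
          ((2*T) ^ (2*(k:ℝ) + (δ/2-1) + 1) * (k.factorial : ℝ) * Real.Gamma ((k:ℝ) + (δ/2-1) + 1))
          * ((2*T) ^ ((k:ℝ)+1) * (k.factorial : ℝ)) := by positivity
      have hR : 0 < (2*T) ^ (-(δ/2-1)) * Real.exp (-(x/(2*T)))
          * ((x/(2*T)) ^ k / Real.Gamma ((k:ℝ) + (δ/2-1) + 1)) := by positivity
      rw [← Real.exp_log hL, ← Real.exp_log hR]
      congr 1
      rw [← Real.rpow_natCast x k, ← Real.rpow_natCast (x/(2*T)) k]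
      repeat' first
        | rw [Real.log_mul (by positivity) (by positivity)]
        | rw [Real.log_div (by positivity) (by positivity)]
      simp only [Real.log_exp, Real.log_rpow h2T, Real.log_rpow hx, Real.log_rpow ha]
      rw [Real.log_div hx.ne' h2T.ne']
      ring
    have hnorm : ∀ k : ℕ, ∫ y in Ioi (0:ℝ), ‖F k y‖ = ∫ y in Ioi (0:ℝ), F k y := by
      intro k
      apply setIntegral_congr_fun measurableSet_Ioi
      intro y hy
      apply Real.norm_of_nonneg
      have hy0 : (0:ℝ) < y := hy
      have := hCpos k
      positivity
    have hsumInt : Summable (fun k : ℕ => ∫ y in Ioi (0:ℝ), ‖F k y‖) := by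
      apply Summable.congr _ (fun k => (hnorm k).symm)
      apply Summable.congr _ (fun k => (hvalF k).symm)
      apply Summable.mul_left
      apply Summable.congr (summable_b hν ha.le)
      intro k
      rw [show (k:ℝ) + (δ/2-1) + 1 = (δ/2-1) + k + 1 by ring]
    have hkey := integral_tsum_of_summable_integral_norm hIntF hsumInt
    have hIeq : ∫ y in Ioi (0:ℝ), y ^ (1 - δ/2) * besqDensity δ y T x
        = ∑' k : ℕ, ∫ y in Ioi (0:ℝ), F k y := by
      rw [hkey]
      apply setIntegral_congr_fun measurableSet_Ioi
      intro y hy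
      exact integrand_eq hδ hx hT hy
    rw [hIeq]
    -- compute the sum
    have hsum_eq : ∑' k : ℕ, (∫ y in Ioi (0:ℝ), F k y)
        = (2*T) ^ (-(δ/2-1)) * Real.exp (-(x/(2*T)))
            * ∑' k : ℕ, ((x/(2*T)) ^ k / Real.Gamma ((δ/2-1) + k + 1)) := by
      rw [← tsum_mul_left]
      apply tsum_congr
      intro k
      rw [hvalF k, show (δ/2-1) + (k:ℝ) + 1 = (k:ℝ) + (δ/2-1) + 1 by ring]
    rw [hsum_eq, hcdf, gamma_series hν ha]
    have hxne : x ^ ((δ:ℝ)/2-1) ≠ 0 := (Real.rpow_pos_of_pos hx _).ne'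
    have h1 : x ^ (1 - δ/2) = (x ^ ((δ:ℝ)/2-1))⁻¹ := by
      rw [show (1 - δ/2 : ℝ) = -(δ/2-1) by ring, Real.rpow_neg hx.le]
    have h2 : (x/(2*T)) ^ ((δ:ℝ)/2-1) = x ^ ((δ:ℝ)/2-1) / (2*T) ^ ((δ:ℝ)/2-1) :=
      Real.div_rpow hx.le h2T.le _
    have h3 : (2*T) ^ (-(δ/2-1)) = ((2*T) ^ ((δ:ℝ)/2-1))⁻¹ := by
      rw [Real.rpow_neg h2T.le]
    rw [h1, h2, h3]
    have h2Tne : (2*T) ^ ((δ:ℝ)/2-1) ≠ 0 := (Real.rpow_pos_of_pos h2T _).ne'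
    have hxne' : x ^ ((δ-2)/2) ≠ 0 := (Real.rpow_pos_of_pos hx _).ne'
    have h2Tne' : (T*2 : ℝ) ^ ((δ-2)/2) ≠ 0 := (Real.rpow_pos_of_pos (by positivity) _).ne'
    have hΓν' : Real.Gamma ((δ-2)/2) ≠ 0 := by
      rw [show (δ-2)/2 = δ/2 - 1 by ring]; exact hΓν.ne'
    field_simp [hxne, h2Tne, hΓν.ne', hxne', h2Tne', hΓν']
  · calc x ^ (1 - δ/2) * ncChiSqCDF (x/T) (δ-2) 0
        < x ^ (1 - δ/2) * 1 := by
          apply mul_lt_mul_of_pos_left _ hxpow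
          rw [hcdf, div_lt_one hΓν]
          exact hlt
      _ = x ^ (1 - δ/2) := mul_one _
end

section
/- The norm of the absorbed squared Bessel density with δ ≤ 0 (or more generally δ < 2 with absorbing boundary) equals the probability of not yet being absorbed: ∫₀^∞ p_{δ}(y, T; x) dy = χ'²(x/T; 2-δ, 0) ≤ 1. -/
open MeasureTheory

private lemma gammaInt_intervalIntegrable {a w : ℝ} (ha : 0 < a) (hw : 0 ≤ w) :
    IntervalIntegrable (fun t => Real.exp (-t) * t ^ (a - 1)) volume 0 w := by
  rw [intervalIntegrable_iff_integrableOn_Ioc_of_le hw]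
  exact (Real.GammaIntegral_convergent ha).mono_set Set.Ioc_subset_Ioi_self

private lemma ftc_step {a w : ℝ} (ha : 0 < a) (hw : 0 ≤ w) :
    ∫ t in (0:ℝ)..w, (Real.exp (-t) * t ^ (a - 1) / Real.Gamma a
        - Real.exp (-t) * t ^ a / Real.Gamma (a + 1))
      = Real.exp (-w) * w ^ a / Real.Gamma (a + 1) := by
  have hga : 0 < Real.Gamma a := Real.Gamma_pos_of_pos ha
  have hga1 : Real.Gamma (a + 1) = a * Real.Gamma a := Real.Gamma_add_one ha.ne'
  have hcont : ContinuousOn (fun t : ℝ => Real.exp (-t) * t ^ a / Real.Gamma (a+1))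
      (Set.Icc 0 w) := by
    apply ContinuousOn.div_const
    exact (Real.continuous_exp.comp continuous_neg).continuousOn.mul
      (ContinuousOn.rpow_const continuousOn_id (fun t _ => Or.inr ha.le))
  have hderiv : ∀ t ∈ Set.Ioo 0 w,
      HasDerivAt (fun t : ℝ => Real.exp (-t) * t ^ a / Real.Gamma (a+1))
      (Real.exp (-t) * t ^ (a-1) / Real.Gamma a - Real.exp (-t) * t ^ a / Real.Gamma (a+1)) t := by
    intro t ht
    have h1 : HasDerivAt (fun t : ℝ => Real.exp (-t)) (-Real.exp (-t)) t := by
      simpa using (hasDerivAt_neg t).exp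
    have h2 : HasDerivAt (fun t : ℝ => t ^ a) (a * t ^ (a-1)) t :=
      Real.hasDerivAt_rpow_const (Or.inl ht.1.ne')
    have h3 := (h1.mul h2).div_const (Real.Gamma (a+1))
    refine h3.congr_deriv ?_
    rw [hga1]
    field_simp
    ring
  have hint : IntervalIntegrable (fun t => Real.exp (-t) * t ^ (a-1) / Real.Gamma a
      - Real.exp (-t) * t ^ a / Real.Gamma (a+1)) volume 0 w := by
    apply IntervalIntegrable.sub
    · exact (gammaInt_intervalIntegrable ha hw).div_const _
    · have := (gammaInt_intervalIntegrable (by linarith : (0:ℝ) < a + 1) hw).div_const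
        (Real.Gamma (a+1))
      simpa using this
  rw [intervalIntegral.integral_eq_sub_of_hasDerivAt_of_le hw hcont hderiv hint]
  simp [Real.zero_rpow ha.ne']

private lemma summable_w_gamma {s M : ℝ} (hs : 0 < s) (hM : 0 ≤ M) :
    Summable (fun k : ℕ => M ^ (s + (k:ℝ)) / Real.Gamma (s + k + 1)) := by
  apply summable_of_ratio_norm_eventually_le (r := 1/2) (by norm_num)
  filter_upwards [Filter.eventually_ge_atTop ⌈2 * M⌉₊] with n hn
  have h1 : (0:ℝ) < s + n + 1 := by positivity
  have hg1 : 0 < Real.Gamma (s + n + 1) := Real.Gamma_pos_of_pos h1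
  have hg2 : 0 < Real.Gamma (s + n + 1 + 1) := Real.Gamma_pos_of_pos (by positivity)
  have hrec : Real.Gamma (s + n + 1 + 1) = (s + n + 1) * Real.Gamma (s + n + 1) :=
    Real.Gamma_add_one h1.ne'
  have hMn : 2 * M ≤ s + n + 1 := by
    have h2 : (⌈2*M⌉₊ : ℝ) ≤ n := Nat.cast_le.mpr hn
    have h3 := Nat.le_ceil (2*M)
    have h4 : (0:ℝ) ≤ n := Nat.cast_nonneg n
    linarith
  have hcast : ((n + 1 : ℕ) : ℝ) = (n:ℝ) + 1 := by push_cast; ring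
  rw [hcast]
  rw [show s + ((n:ℝ) + 1) + 1 = s + n + 1 + 1 by ring, show s + ((n:ℝ) + 1) = s + n + 1 by ring]
  rcases eq_or_lt_of_le hM with h | hM'
  · rw [← h, Real.zero_rpow (by positivity : s + (n:ℝ) + 1 ≠ 0)]
    simp
    positivity
  · have e : M ^ (s + (n:ℝ) + 1) / Real.Gamma (s + n + 1 + 1)
        = (M ^ (s + (n:ℝ)) / Real.Gamma (s + n + 1)) * (M / (s + n + 1)) := by
      rw [hrec, show s + (n:ℝ) + 1 = (s + n) + 1 by ring, Real.rpow_add hM', Real.rpow_one]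
      field_simp
    rw [e, Real.norm_of_nonneg (by positivity), Real.norm_of_nonneg (by positivity)]
    calc (M ^ (s + (n:ℝ)) / Real.Gamma (s + n + 1)) * (M / (s + n + 1))
        ≤ (M ^ (s + (n:ℝ)) / Real.Gamma (s + n + 1)) * (1/2) := by
          apply mul_le_mul_of_nonneg_left _ (by positivity)
          rw [div_le_iff₀ h1]
          linarith
      _ = 1/2 * (M ^ (s + (n:ℝ)) / Real.Gamma (s + n + 1)) := by ring

private lemma tendsto_w_gamma {s M : ℝ} (hs : 0 < s) (hM : 0 < M) :
    Filter.Tendsto (fun n : ℕ => M ^ (s + (n:ℝ) - 1) / Real.Gamma (s + n))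
      Filter.atTop (nhds 0) := by
  have h := (summable_w_gamma hs hM.le).tendsto_atTop_zero
  rw [← Filter.tendsto_add_atTop_iff_nat 1]
  apply h.congr
  intro n
  have hcast : ((n + 1 : ℕ) : ℝ) = (n:ℝ) + 1 := by push_cast; ring
  rw [hcast, show s + ((n:ℝ) + 1) - 1 = s + n by ring, show s + ((n:ℝ)+1) = s + n + 1 by ring]

private lemma hasSum_lowerGamma {ν w : ℝ} (hν : 0 < ν) (hw : 0 ≤ w) :
    HasSum (fun k : ℕ => Real.exp (-w) * w ^ (ν + (k:ℝ)) / Real.Gamma (ν + k + 1))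
      (∫ t in (0:ℝ)..w, Real.exp (-t) * t ^ (ν - 1) / Real.Gamma ν) := by
  set H : ℝ → ℝ := fun a => ∫ t in (0:ℝ)..w, Real.exp (-t) * t ^ (a - 1) / Real.Gamma a with hH
  have hterm : ∀ a : ℝ, 0 < a →
      Real.exp (-w) * w ^ a / Real.Gamma (a+1) = H a - H (a+1) := by
    intro a ha
    have i1 := (gammaInt_intervalIntegrable ha hw).div_const (Real.Gamma a)
    have i2' := (gammaInt_intervalIntegrable (show (0:ℝ) < a+1 by linarith) hw).div_const
      (Real.Gamma (a+1))
    have i2 : IntervalIntegrable (fun t => Real.exp (-t) * t ^ a / Real.Gamma (a+1))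
        volume 0 w := by
      simpa using i2'
    have hHa1 : H (a+1) = ∫ t in (0:ℝ)..w, Real.exp (-t) * t ^ a / Real.Gamma (a+1) := by
      simp only [hH, add_sub_cancel_right]
    have hHa : H a = ∫ t in (0:ℝ)..w, Real.exp (-t) * t ^ (a-1) / Real.Gamma a := by
      simp only [hH]
    rw [hHa, hHa1, ← intervalIntegral.integral_sub i1 i2, ftc_step ha hw]
  have hpartial : ∀ n : ℕ, ∑ k ∈ Finset.range n,
      Real.exp (-w) * w ^ (ν + (k:ℝ)) / Real.Gamma (ν + k + 1) = H ν - H (ν + n) := by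
    intro n
    induction n with
    | zero => simp
    | succ n ih =>
      rw [Finset.sum_range_succ, ih]
      have ht := hterm (ν + n) (by positivity)
      have hcast : ((n + 1 : ℕ) : ℝ) = (n:ℝ) + 1 := by push_cast; ring
      rw [hcast, show ν + ((n:ℝ) + 1) = ν + n + 1 by ring]
      linarith
  have hnonneg : ∀ k : ℕ, 0 ≤ Real.exp (-w) * w ^ (ν + (k:ℝ)) / Real.Gamma (ν+k+1) := by
    intro k
    have : 0 < Real.Gamma (ν + k + 1) := Real.Gamma_pos_of_pos (by positivity)
    positivity
  rw [hasSum_iff_tendsto_nat_of_nonneg hnonneg]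
  have h0 : Filter.Tendsto (fun n : ℕ => H (ν + n)) Filter.atTop (nhds 0) := by
    have hM : (0:ℝ) < max w 1 := lt_of_lt_of_le one_pos (le_max_right _ _)
    apply squeeze_zero_norm'
      (a := fun n : ℕ => w * (max w 1 ^ (ν + (n:ℝ) - 1) / Real.Gamma (ν + n)))
    · filter_upwards [Filter.eventually_ge_atTop 1] with n hn
      have hn1 : (1:ℝ) ≤ n := by exact_mod_cast hn
      have hexp0 : (0:ℝ) ≤ ν + n - 1 := by linarith
      have hgpos : 0 < Real.Gamma (ν + n) := Real.Gamma_pos_of_pos (by positivity)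
      have hb : ∀ t ∈ Set.Ioc (0:ℝ) w,
          ‖Real.exp (-t) * t ^ (ν + (n:ℝ) - 1) / Real.Gamma (ν+n)‖
            ≤ (max w 1) ^ (ν + (n:ℝ) - 1) / Real.Gamma (ν + n) := by
        intro t ht
        rw [Real.norm_of_nonneg (div_nonneg (mul_nonneg (Real.exp_nonneg _)
          (Real.rpow_nonneg ht.1.le _)) hgpos.le)]
        gcongr
        calc Real.exp (-t) * t ^ (ν + (n:ℝ) - 1)
            ≤ 1 * (max w 1) ^ (ν + (n:ℝ) - 1) := by
              apply mul_le_mul (Real.exp_le_one_iff.mpr (by linarith [ht.1]))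
                (Real.rpow_le_rpow ht.1.le (le_trans ht.2 (le_max_left w 1)) hexp0)
                (Real.rpow_nonneg ht.1.le _) one_pos.le
          _ = (max w 1) ^ (ν + (n:ℝ) - 1) := one_mul _
      have hnorm := MeasureTheory.norm_setIntegral_le_of_norm_le_const (μ := volume)
        (measure_Ioc_lt_top) hb
      have hHval : H (ν + (n:ℝ)) = ∫ t in Set.Ioc (0:ℝ) w,
          Real.exp (-t) * t ^ (ν + (n:ℝ) - 1) / Real.Gamma (ν + n) := by
        simp only [hH]
        rw [intervalIntegral.integral_of_le hw]
      rw [hHval]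
      calc ‖∫ t in Set.Ioc (0:ℝ) w, Real.exp (-t) * t ^ (ν + (n:ℝ) - 1) / Real.Gamma (ν + n)‖
          ≤ ((max w 1) ^ (ν + (n:ℝ) - 1) / Real.Gamma (ν + n)) * (volume (Set.Ioc (0:ℝ) w)).toReal := hnorm
        _ = w * ((max w 1) ^ (ν + (n:ℝ) - 1) / Real.Gamma (ν + n)) := by
            rw [Real.volume_Ioc, ENNReal.toReal_ofReal (by linarith)]
            ring
    · have := (tendsto_w_gamma hν hM).const_mul w
      simpa using this
  have hlim : Filter.Tendsto (fun n : ℕ => H ν - H (ν + n)) Filter.atTop (nhds (H ν)) := by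
    simpa using tendsto_const_nhds.sub h0
  exact hlim.congr fun n => (hpartial n).symm

private lemma lowerGamma_le_one {ν w : ℝ} (hν : 0 < ν) (hw : 0 ≤ w) :
    (∫ t in (0:ℝ)..w, Real.exp (-t) * t ^ (ν-1) / Real.Gamma ν) ≤ 1 := by
  have hΓ : 0 < Real.Gamma ν := Real.Gamma_pos_of_pos hν
  rw [intervalIntegral.integral_of_le hw]
  have h1 : (∫ t in Set.Ioi (0:ℝ), Real.exp (-t) * t ^ (ν-1) / Real.Gamma ν) = 1 := by
    rw [MeasureTheory.integral_div, ← Real.Gamma_eq_integral hν, div_self hΓ.ne']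
  calc ∫ t in Set.Ioc (0:ℝ) w, Real.exp (-t) * t ^ (ν-1) / Real.Gamma ν
      ≤ ∫ t in Set.Ioi (0:ℝ), Real.exp (-t) * t ^ (ν-1) / Real.Gamma ν := ?_
    _ = 1 := h1
  apply MeasureTheory.setIntegral_mono_set
  · exact (Real.GammaIntegral_convergent hν).div_const _
  · filter_upwards [MeasureTheory.ae_restrict_mem measurableSet_Ioi] with t ht
    exact div_nonneg (mul_nonneg (Real.exp_nonneg _) (Real.rpow_nonneg (le_of_lt ht) _)) hΓ.le
  · exact HasSubset.Subset.eventuallyLE Set.Ioc_subset_Ioi_self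

private lemma ncCDF_eq {δ x T : ℝ} (hδ : δ < 2) (hx : 0 < x) (hT : 0 < T) :
    ncChiSqCDF (x / T) (2 - δ) 0
      = ∫ t in (0:ℝ)..(x/(2*T)), Real.exp (-t) * t ^ ((1 - δ/2) - 1) / Real.Gamma (1 - δ/2) := by
  have hν : 0 < 1 - δ/2 := by linarith
  set ν := 1 - δ/2 with hνdef
  have hΓ : 0 < Real.Gamma ν := Real.Gamma_pos_of_pos hν
  have h2ν : (0:ℝ) < 2 ^ ν := Real.rpow_pos_of_pos two_pos _
  have h2ν1 : (0:ℝ) < 2 ^ (ν - 1) := Real.rpow_pos_of_pos two_pos _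
  have hpdf : ∀ z : ℝ, ncChiSqPDF (2-δ) 0 z
      = z ^ (ν - 1) * Real.exp (-z/2) / (2 ^ ν * Real.Gamma ν) := by
    intro z
    unfold ncChiSqPDF
    rw [tsum_eq_single 0 ?_]
    · norm_num
      rw [show (2-δ)/2 = ν by rw [hνdef]; ring]
    · intro j hj
      simp [zero_pow hj]
  unfold ncChiSqCDF
  rw [intervalIntegral.integral_congr
    (g := fun z => z ^ (ν - 1) * Real.exp (-z/2) / (2 ^ ν * Real.Gamma ν))
    (fun z _ => hpdf z)]
  have hcomp := intervalIntegral.integral_comp_mul_left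
    (f := fun z => z ^ (ν - 1) * Real.exp (-z/2) / (2 ^ ν * Real.Gamma ν))
    (a := 0) (b := x/(2*T)) (c := 2) two_ne_zero
  rw [show (2:ℝ) * 0 = 0 by ring, show (2:ℝ)*(x/(2*T)) = x/T by field_simp] at hcomp
  have hstep : (∫ t in (0:ℝ)..(x/T),
      t ^ (ν - 1) * Real.exp (-t/2) / (2 ^ ν * Real.Gamma ν))
      = 2 * ∫ u in (0:ℝ)..(x/(2*T)),
        (2*u) ^ (ν - 1) * Real.exp (-(2*u)/2) / (2 ^ ν * Real.Gamma ν) := by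
    rw [hcomp, smul_eq_mul]
    ring
  rw [hstep, ← intervalIntegral.integral_const_mul]
  apply intervalIntegral.integral_congr
  intro u hu
  rw [Set.uIcc_of_le (by positivity)] at hu
  have hu0 : 0 ≤ u := hu.1
  simp only
  rw [show -(2*u)/2 = -u by ring, Real.mul_rpow two_pos.le hu0]
  have h2e : (2:ℝ)^ν = 2 * 2^(ν-1) := by
    have h := Real.rpow_add two_pos 1 (ν-1)
    rw [show (1:ℝ)+(ν-1) = ν by ring, Real.rpow_one] at h
    exact h
  rw [h2e]
  field_simp

private lemma term_algebra {x T y ν : ℝ} (hx : 0 < x) (hT : 0 < T) (hy : 0 < y)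
    (hν : 0 < ν) (k : ℕ) :
    (1 / (2 * T)) * (y / x) ^ (-(ν/2)) * Real.exp (-(x + y) / (2 * T)) *
      ((Real.sqrt (x * y) / T / 2) ^ (2 * (k : ℝ) + ν)
        / ((k.factorial : ℝ) * Real.Gamma ((k : ℝ) + ν + 1)))
    = (Real.exp (-(x/(2*T))) * (x/(2*T)) ^ (ν + (k:ℝ)) / Real.Gamma (ν + (k:ℝ) + 1)) *
        ((y ^ ((k:ℝ)) * Real.exp (-((1/(2*T)) * y))) / ((k.factorial : ℝ) * (2*T) ^ ((k:ℝ)+1))) := by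
  have h2T : (0:ℝ) < 2*T := by positivity
  have hxy : (0:ℝ) < x*y := by positivity
  have hsq : (0:ℝ) < Real.sqrt (x*y) := Real.sqrt_pos.mpr hxy
  have hyx : (0:ℝ) < y/x := by positivity
  have hbase : Real.sqrt (x*y)/T/2 = Real.sqrt (x*y)/(2*T) := by
    rw [div_div, mul_comm T 2]
  have hb2 : (0:ℝ) < Real.sqrt (x*y)/(2*T) := by positivity
  have hΓ : 0 < Real.Gamma (ν + (k:ℝ) + 1) := Real.Gamma_pos_of_pos (by positivity)
  have hfac : (0:ℝ) < (k.factorial : ℝ) := by exact_mod_cast k.factorial_pos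
  rw [show (k:ℝ) + ν + 1 = ν + (k:ℝ) + 1 by ring, hbase]
  set L := Real.log (2*T) with hL
  set lx := Real.log x with hlx
  set ly := Real.log y with hly
  have e1 : (y/x) ^ (-(ν/2)) = Real.exp ((ly - lx) * (-(ν/2))) := by
    rw [Real.rpow_def_of_pos hyx, Real.log_div hy.ne' hx.ne']
  have e2 : (Real.sqrt (x*y)/(2*T)) ^ (2*(k:ℝ)+ν)
      = Real.exp (((lx + ly)/2 - L) * (2*(k:ℝ)+ν)) := by
    rw [Real.rpow_def_of_pos hb2, Real.log_div hsq.ne' h2T.ne', Real.log_sqrt hxy.le,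
      Real.log_mul hx.ne' hy.ne']
  have e3 : (x/(2*T)) ^ (ν + (k:ℝ)) = Real.exp ((lx - L) * (ν+(k:ℝ))) := by
    rw [Real.rpow_def_of_pos (by positivity), Real.log_div hx.ne' h2T.ne']
  have e4 : y ^ ((k:ℝ)) = Real.exp (ly * (k:ℝ)) := by
    rw [Real.rpow_def_of_pos hy]
  have e5 : (2*T) ^ ((k:ℝ)+1) = Real.exp (L * ((k:ℝ)+1)) := by
    rw [Real.rpow_def_of_pos h2T]
  have e6 : 1/(2*T) = Real.exp (-L) := by
    rw [Real.exp_neg, Real.exp_log h2T, one_div]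
  rw [e1, e2, e3, e4, e5, e6]
  simp only [← Real.exp_add, ← mul_div_assoc, div_mul_eq_mul_div, div_div]
  rw [div_eq_div_iff (by positivity) (by positivity)]
  rw [← e6]
  have hAB : ∀ A B C D : ℝ, Real.exp A * (C * (D * Real.exp B)) = Real.exp (A+B) * (C*D) := by
    intros; rw [Real.exp_add]; ring
  rw [hAB, show ((k.factorial:ℝ)) * Real.Gamma (ν + (k:ℝ) + 1)
    = Real.Gamma (ν + (k:ℝ) + 1) * (k.factorial:ℝ) from mul_comm _ _]
  congr 1
  rw [Real.exp_eq_exp]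
  ring

private lemma besq_integral {δ x T : ℝ} (hδ : δ < 2) (hx : 0 < x) (hT : 0 < T) :
    (∫ y in Set.Ioi (0:ℝ), besqDensity δ y T x)
      = ∫ t in (0:ℝ)..(x/(2*T)),
          Real.exp (-t) * t ^ ((1 - δ/2) - 1) / Real.Gamma (1 - δ/2) := by
  have hν : 0 < 1 - δ/2 := by linarith
  set ν := 1 - δ/2 with hνdef
  have h2T : (0:ℝ) < 2*T := by positivity
  have hw : 0 < x/(2*T) := by positivity
  set F : ℕ → ℝ → ℝ := fun k y =>
    (Real.exp (-(x/(2*T))) * (x/(2*T)) ^ (ν + (k:ℝ)) / Real.Gamma (ν + (k:ℝ) + 1)) *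
      ((y ^ ((k:ℝ)) * Real.exp (-((1/(2*T)) * y))) / ((k.factorial : ℝ) * (2*T) ^ ((k:ℝ)+1)))
    with hF
  have hbase_int : ∀ k : ℕ, IntegrableOn
      (fun y : ℝ => y ^ ((k:ℝ)) * Real.exp (-((1/(2*T)) * y))) (Set.Ioi 0) := by
    intro k
    have h := integrableOn_rpow_mul_exp_neg_mul_rpow (p := 1) (s := (k:ℝ)) (b := 1/(2*T))
      (by linarith [Nat.cast_nonneg (α := ℝ) k]) one_pos (by positivity)
    simpa [Real.rpow_one, neg_mul] using h
  have hΓpos : ∀ k : ℕ, 0 < Real.Gamma (ν + (k:ℝ) + 1) := fun k =>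
    Real.Gamma_pos_of_pos (by positivity)
  have hfac : ∀ k : ℕ, (0:ℝ) < (k.factorial : ℝ) := fun k => by
    exact_mod_cast k.factorial_pos
  have hpow2T : ∀ k : ℕ, (0:ℝ) < (2*T) ^ ((k:ℝ)+1) := fun k =>
    Real.rpow_pos_of_pos h2T _
  have hFint : ∀ k : ℕ, IntegrableOn (F k) (Set.Ioi 0) := by
    intro k
    exact ((hbase_int k).div_const _).const_mul _
  have hval : ∀ k : ℕ, (∫ y in Set.Ioi (0:ℝ), y ^ ((k:ℝ)) * Real.exp (-((1/(2*T)) * y)))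
      = (2*T) ^ ((k:ℝ)+1) * (k.factorial : ℝ) := by
    intro k
    have h := Real.integral_rpow_mul_exp_neg_mul_Ioi (a := (k:ℝ)+1) (r := 1/(2*T))
      (by positivity) (by positivity)
    rw [show ((k:ℝ)+1) - 1 = (k:ℝ) by ring] at h
    rw [h, one_div_one_div]
    congr 1
    rw [show (k:ℝ)+1 = ((k:ℕ):ℝ)+1 from rfl, Real.Gamma_nat_eq_factorial]
  have hFval : ∀ k : ℕ, (∫ y in Set.Ioi (0:ℝ), F k y)
      = Real.exp (-(x/(2*T))) * (x/(2*T)) ^ (ν + (k:ℝ)) / Real.Gamma (ν + (k:ℝ) + 1) := by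
    intro k
    rw [hF]
    simp only
    rw [MeasureTheory.integral_const_mul, MeasureTheory.integral_div, hval k]
    rw [mul_comm ((2*T) ^ ((k:ℝ)+1)) ((k.factorial : ℝ)), div_self (by positivity), mul_one]
  have hFnonneg : ∀ k : ℕ, ∀ y ∈ Set.Ioi (0:ℝ), 0 ≤ F k y := by
    intro k y hy
    have hy0 : (0:ℝ) < y := hy
    rw [hF]
    simp only
    apply mul_nonneg
    · exact div_nonneg (mul_nonneg (Real.exp_nonneg _) (Real.rpow_nonneg hw.le _)) (hΓpos k).le
    · exact div_nonneg (mul_nonneg (Real.rpow_nonneg hy0.le _) (Real.exp_nonneg _))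
        (mul_nonneg (hfac k).le (hpow2T k).le)
  have hnormval : ∀ k : ℕ, (∫ y in Set.Ioi (0:ℝ), ‖F k y‖)
      = ∫ y in Set.Ioi (0:ℝ), F k y := by
    intro k
    apply MeasureTheory.setIntegral_congr_fun measurableSet_Ioi
    intro y hy
    exact Real.norm_of_nonneg (hFnonneg k y hy)
  have hsum : Summable (fun k : ℕ => ∫ y in Set.Ioi (0:ℝ), ‖F k y‖) := by
    have : (fun k : ℕ => ∫ y in Set.Ioi (0:ℝ), ‖F k y‖)
        = fun k : ℕ => Real.exp (-(x/(2*T)))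
            * ((x/(2*T)) ^ (ν + (k:ℝ)) / Real.Gamma (ν + (k:ℝ) + 1)) := by
      funext k
      rw [hnormval k, hFval k, mul_div_assoc]
    rw [this]
    exact (summable_w_gamma hν hw.le).mul_left _
  have hpt : ∀ y ∈ Set.Ioi (0:ℝ), besqDensity δ y T x = ∑' k, F k y := by
    intro y hy
    have hy0 : (0:ℝ) < y := hy
    simp only [besqDensity]
    rw [show |δ/2 - 1| = ν by rw [abs_of_neg (by linarith : δ/2 - 1 < 0), hνdef]; ring]
    rw [show (1/2 : ℝ) * (δ/2 - 1) = -(ν/2) by rw [hνdef]; ring]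
    simp only [besselI]
    rw [← tsum_mul_left]
    apply tsum_congr
    intro k
    exact term_algebra hx hT hy0 hν k
  rw [MeasureTheory.setIntegral_congr_fun measurableSet_Ioi hpt]
  rw [← MeasureTheory.integral_tsum_of_summable_integral_norm hFint hsum]
  calc ∑' k, ∫ y in Set.Ioi (0:ℝ), F k y
      = ∑' k : ℕ, Real.exp (-(x/(2*T))) * (x/(2*T)) ^ (ν + (k:ℝ))
          / Real.Gamma (ν + (k:ℝ) + 1) := tsum_congr hFval
    _ = ∫ t in (0:ℝ)..(x/(2*T)), Real.exp (-t) * t ^ (ν - 1) / Real.Gamma ν :=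
        (hasSum_lowerGamma hν hw.le).tsum_eq

/-- The norm of the absorbed squared Bessel density with `δ < 2` equals the
probability of not yet being absorbed:
`∫₀^∞ p_δ(y, T; x) dy = χ'²(x/T; 2-δ, 0) ≤ 1`. -/
theorem stmt11 (δ x T : ℝ) (hδ : δ < 2) (hx : 0 < x) (hT : 0 < T) :
    (∫ y in Set.Ioi (0 : ℝ), besqDensity δ y T x) = ncChiSqCDF (x / T) (2 - δ) 0 ∧
    ncChiSqCDF (x / T) (2 - δ) 0 ≤ 1 := by
  have hν : 0 < 1 - δ/2 := by linarith
  have hw : (0:ℝ) ≤ x/(2*T) := by positivity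
  have h1 := besq_integral hδ hx hT
  have h2 := ncCDF_eq hδ hx hT
  exact ⟨h1.trans h2.symm, h2.trans_le (lowerGamma_le_one hν hw)⟩
end

section
/- For a nonnegative random variable X with E[X^{-(δ/2-1)}·1_{X < K̃}] expressible via the BESQ transition density with δ > 2, the identity E[X^{-(δ/2-1)} 1_{X < K̃}] = x^{-(δ/2-1)}[χ'²(x/Δφ; δ-2, 0) - χ'²(x/Δφ; δ-2, K̃/Δφ)] holds, where x is the initial value and Δφ the elapsed transformed time. -/
open MeasureTheory

lemma exp_tsum (m : ℝ) : ∑' j : ℕ, m ^ j / (j.factorial : ℝ) = Real.exp m := by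
  rw [Real.exp_eq_exp_ℝ, NormedSpace.exp_eq_tsum_div]

lemma summable_pow_fact (m : ℝ) : Summable (fun j : ℕ => m ^ j / (j.factorial : ℝ)) :=
  Real.summable_pow_div_factorial m

lemma gamma_lower (ν : ℝ) (hν : 0 < ν) : ∀ k : ℕ,
    (k.factorial : ℝ) * Real.Gamma (ν + 1) ≤ Real.Gamma (ν + k + 1) := by
  intro k
  induction k with
  | zero => simp
  | succ n ih =>
    have h1 : (ν + (n+1) + 1 : ℝ) = (ν + n + 1) + 1 := by push_cast; ring
    have h2 : Real.Gamma (ν + (n:ℕ) + 1 + 1) = (ν + n + 1) * Real.Gamma (ν + n + 1) :=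
      Real.Gamma_add_one (by positivity)
    have h3 : (ν + n + 1 : ℝ) ≥ (n + 1 : ℝ) := by linarith
    have h4 : (0:ℝ) ≤ Real.Gamma (ν + n + 1) := by
      have := Real.Gamma_pos_of_pos (show (0:ℝ) < ν + n + 1 by positivity)
      linarith
    have h5 : ((n+1).factorial : ℝ) = (n+1) * n.factorial := by
      rw [Nat.factorial_succ]; push_cast; ring
    push_cast [h1] at *
    rw [h2, h5]
    calc (n + 1 : ℝ) * n.factorial * Real.Gamma (ν + 1)
        = (n+1) * ((n.factorial : ℝ) * Real.Gamma (ν + 1)) := by ring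
      _ ≤ (n+1) * Real.Gamma (ν + n + 1) := by
          apply mul_le_mul_of_nonneg_left ih (by positivity)
      _ ≤ (ν + n + 1) * Real.Gamma (ν + n + 1) := by
          apply mul_le_mul_of_nonneg_right h3 h4

lemma summable_over_gamma (ν c : ℝ) (hν : 0 < ν) (hc : 0 ≤ c) :
    Summable (fun k : ℕ => c ^ k / ((k.factorial : ℝ) * Real.Gamma (ν + k + 1))) := by
  apply Summable.of_nonneg_of_le (f := fun k : ℕ => c ^ k / ((k.factorial:ℝ) * Real.Gamma (ν+1)))
  · intro k
    have := Real.Gamma_pos_of_pos (show (0:ℝ) < ν + k + 1 by positivity)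
    positivity
  · intro k
    have hΓ1 : (0:ℝ) < Real.Gamma (ν + 1) := Real.Gamma_pos_of_pos (by positivity)
    have hfac : (1:ℝ) ≤ (k.factorial : ℝ) := by exact_mod_cast Nat.one_le_iff_ne_zero.mpr k.factorial_ne_zero
    have hle : Real.Gamma (ν + 1) ≤ Real.Gamma (ν + k + 1) := by
      calc Real.Gamma (ν+1) = 1 * Real.Gamma (ν+1) := by ring
        _ ≤ (k.factorial : ℝ) * Real.Gamma (ν+1) := by
            apply mul_le_mul_of_nonneg_right hfac hΓ1.le
        _ ≤ _ := gamma_lower ν hν k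
    apply div_le_div_of_nonneg_left (by positivity) (by positivity)
    exact mul_le_mul_of_nonneg_left hle (by positivity)
  · simp_rw [← div_div]
    exact (Real.summable_pow_div_factorial c).div_const _

noncomputable def Hh (m : ℝ) (k : ℕ) : ℝ := ∫ t in (0:ℝ)..m, t ^ k * Real.exp (-t)

lemma Hh_zero (m : ℝ) : Hh m 0 = 1 - Real.exp (-m) := by
  have : ∀ t ∈ Set.uIcc (0:ℝ) m, HasDerivAt (fun s => -Real.exp (-s)) (t ^ 0 * Real.exp (-t)) t := by
    intro t _
    have h : HasDerivAt (fun s => -Real.exp (-s)) (-(Real.exp (-t) * -1)) t :=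
      ((hasDerivAt_neg t).exp).neg
    convert h using 1
    simp
  have hint : IntervalIntegrable (fun t : ℝ => t ^ 0 * Real.exp (-t)) volume 0 m := by
    apply Continuous.intervalIntegrable; continuity
  have := intervalIntegral.integral_eq_sub_of_hasDerivAt this hint
  rw [Hh, this]; simp; ring

lemma Hh_succ (m : ℝ) (k : ℕ) :
    Hh m (k + 1) = (k + 1) * Hh m k - m ^ (k+1) * Real.exp (-m) := by
  have key : ∀ t ∈ Set.uIcc (0:ℝ) m, HasDerivAt (fun s => -(s ^ (k+1) * Real.exp (-s)))
      (t ^ (k+1) * Real.exp (-t) - (k+1) * (t ^ k * Real.exp (-t))) t := by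
    intro t _
    have d1 : HasDerivAt (fun s : ℝ => s ^ (k+1)) ((k+1) * t ^ k) t := by
      simpa using hasDerivAt_pow (k+1) t
    have d2 : HasDerivAt (fun s : ℝ => Real.exp (-s)) (-Real.exp (-t)) t := by
      simpa using (hasDerivAt_neg t).exp
    have : HasDerivAt (fun s => -(s ^ (k+1) * Real.exp (-s)))
        (-((k+1) * t ^ k * Real.exp (-t) + t ^ (k+1) * -Real.exp (-t))) t := (d1.mul d2).neg
    convert this using 1
    ring
  have hint : IntervalIntegrable
      (fun t : ℝ => t ^ (k+1) * Real.exp (-t) - (k+1) * (t ^ k * Real.exp (-t))) volume 0 m := by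
    apply Continuous.intervalIntegrable; continuity
  have h := intervalIntegral.integral_eq_sub_of_hasDerivAt key hint
  have hsplit : (∫ t in (0:ℝ)..m, (t ^ (k+1) * Real.exp (-t) - (k+1) * (t ^ k * Real.exp (-t))))
      = Hh m (k+1) - (k+1) * Hh m k := by
    rw [intervalIntegral.integral_sub, intervalIntegral.integral_const_mul]
    · rfl
    · apply Continuous.intervalIntegrable; continuity
    · apply Continuous.intervalIntegrable
      exact continuous_const.mul (by continuity)
  rw [hsplit] at h
  simp at h
  linarith [h]

lemma Hh_closed (m : ℝ) (k : ℕ) :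
    Hh m k / k.factorial = 1 - Real.exp (-m) * ∑ j ∈ Finset.range (k+1), m ^ j / j.factorial := by
  induction k with
  | zero => simp [Hh_zero]
  | succ n ih =>
    have hfacpos : (0:ℝ) < n.factorial := by positivity
    have hfs : ((n+1).factorial : ℝ) = (n+1) * n.factorial := by
      rw [Nat.factorial_succ]; push_cast; ring
    rw [Finset.sum_range_succ (n := n+1)]
    rw [Hh_succ, hfs]
    have : ((n:ℝ) + 1) ≠ 0 := by positivity
    field_simp at ih ⊢
    rw [mul_comm ((n:ℝ)+1) (n.factorial:ℝ)] at *
    nlinarith [ih]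

noncomputable def Gg (ν z2 : ℝ) (j : ℕ) : ℝ :=
  ∫ t in (0:ℝ)..z2, t ^ (ν + j - 1) * Real.exp (-t)

noncomputable def Aa (ν z2 : ℝ) (k : ℕ) : ℝ :=
  z2 ^ (ν + k) * Real.exp (-z2) / Real.Gamma (ν + k + 1)

lemma partialGamma_ofReal (a X : ℝ) (hX : 0 ≤ X) :
    Complex.partialGamma (a : ℂ) X =
      ((∫ t in (0:ℝ)..X, t ^ (a - 1) * Real.exp (-t) : ℝ) : ℂ) := by
  rw [Complex.partialGamma, ← intervalIntegral.integral_ofReal]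
  apply intervalIntegral.integral_congr
  intro t ht
  rw [Set.uIcc_of_le hX] at ht
  have ht0 : (0:ℝ) ≤ t := ht.1
  show (Real.exp (-t) : ℂ) * (t:ℂ) ^ ((a:ℂ) - 1) = ((t ^ (a - 1) * Real.exp (-t) : ℝ) : ℂ)
  rw [show ((a:ℂ) - 1) = ((a - 1 : ℝ) : ℂ) by push_cast; ring,
    ← Complex.ofReal_cpow ht0]
  push_cast
  ring

lemma Greal_add_one {a X : ℝ} (ha : 0 < a) (hX : 0 ≤ X) :
    (∫ t in (0:ℝ)..X, t ^ a * Real.exp (-t)) =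
      a * (∫ t in (0:ℝ)..X, t ^ (a - 1) * Real.exp (-t)) - X ^ a * Real.exp (-X) := by
  have h := Complex.partialGamma_add_one (s := (a : ℂ)) (by simpa using ha) hX
  rw [partialGamma_ofReal a X hX] at h
  have h2 : Complex.partialGamma ((a : ℂ) + 1) X =
      ((∫ t in (0:ℝ)..X, t ^ a * Real.exp (-t) : ℝ) : ℂ) := by
    have := partialGamma_ofReal (a + 1) X hX
    push_cast at this ⊢
    rw [this]
    norm_num
  have hcast : ((Real.exp (-X) : ℝ) : ℂ) * (X:ℂ) ^ (a:ℂ) =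
      ((Real.exp (-X) * X ^ a : ℝ) : ℂ) := by
    rw [← Complex.ofReal_cpow hX]
    push_cast
    ring
  rw [h2, hcast] at h
  have h3 : (((∫ t in (0:ℝ)..X, t ^ a * Real.exp (-t) : ℝ)) : ℂ) =
      ((a * (∫ t in (0:ℝ)..X, t ^ (a-1) * Real.exp (-t)) - X ^ a * Real.exp (-X) : ℝ) : ℂ) := by
    rw [h]; push_cast; ring
  exact_mod_cast h3

lemma Gg_succ {ν z2 : ℝ} (hν : 0 < ν) (hz : 0 ≤ z2) (j : ℕ) :
    Gg ν z2 (j + 1) = (ν + j) * Gg ν z2 j - z2 ^ (ν + j) * Real.exp (-z2) := by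
  have ha : (0:ℝ) < ν + j := by positivity
  have h := Greal_add_one (a := ν + (j:ℝ)) ha hz
  rw [Gg, Gg]
  push_cast
  rw [show (ν + ((j:ℝ) + 1) - 1) = ν + (j:ℝ) by ring]
  rw [show (ν + (j:ℝ) - 1) = (ν + (j:ℝ)) - 1 by ring]
  exact h

lemma Gg_nonneg {ν z2 : ℝ} (hz : 0 ≤ z2) (j : ℕ) : 0 ≤ Gg ν z2 j := by
  apply intervalIntegral.integral_nonneg hz
  intro t ht
  exact mul_nonneg (Real.rpow_nonneg ht.1 _) (Real.exp_pos _).le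

lemma Gamma_integrand_integrableOn {a : ℝ} (ha : 0 < a) (s : Set ℝ) (hs : s ⊆ Set.Ioi 0) :
    IntegrableOn (fun t : ℝ => t ^ (a - 1) * Real.exp (-t)) s := by
  apply IntegrableOn.mono_set _ hs
  have := Real.GammaIntegral_convergent ha
  apply this.congr_fun _ measurableSet_Ioi
  intro t _; ring

lemma Gg_le_Gamma {ν z2 : ℝ} (hν : 0 < ν) (hz : 0 ≤ z2) (j : ℕ) :
    Gg ν z2 j ≤ Real.Gamma (ν + j) := by
  have ha : (0:ℝ) < ν + j := by positivity
  rw [Gg, Real.Gamma_eq_integral ha, intervalIntegral.integral_of_le hz]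
  have : (∫ t in Set.Ioi (0:ℝ), Real.exp (-t) * t ^ (ν + (j:ℝ) - 1))
      = ∫ t in Set.Ioi (0:ℝ), t ^ (ν + (j:ℝ) - 1) * Real.exp (-t) := by
    apply setIntegral_congr_fun measurableSet_Ioi; intro t _; ring
  rw [this]
  apply setIntegral_mono_set
  · exact Gamma_integrand_integrableOn ha _ (subset_refl _)
  · filter_upwards [self_mem_ae_restrict measurableSet_Ioi] with t ht
    have : (0:ℝ) < t := ht
    positivity
  · exact HasSubset.Subset.eventuallyLE Set.Ioc_subset_Ioi_self

lemma Gg_telescope {ν z2 : ℝ} (hν : 0 < ν) (hz : 0 ≤ z2) (j : ℕ) :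
    Gg ν z2 0 / Real.Gamma ν - Gg ν z2 j / Real.Gamma (ν + j) =
      ∑ i ∈ Finset.range j, Aa ν z2 i := by
  induction j with
  | zero => simp
  | succ n ih =>
    rw [Finset.sum_range_succ, ← ih]
    have hpos : (0:ℝ) < ν + n := by positivity
    have hGpos : (0:ℝ) < Real.Gamma (ν + n) := Real.Gamma_pos_of_pos hpos
    have hΓ : Real.Gamma (ν + ((n+1 : ℕ):ℝ)) = (ν + n) * Real.Gamma (ν + n) := by
      rw [show (ν + ((n+1 : ℕ):ℝ)) = (ν + (n:ℝ)) + 1 by push_cast; ring,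
        Real.Gamma_add_one hpos.ne']
    have hA : Aa ν z2 n = z2 ^ (ν + (n:ℝ)) * Real.exp (-z2) / ((ν + n) * Real.Gamma (ν + n)) := by
      rw [Aa, show (ν + (n:ℝ) + 1) = (ν + (n:ℝ)) + 1 by ring, Real.Gamma_add_one hpos.ne']
    rw [Gg_succ hν hz n, hΓ, hA]
    field_simp
    ring

lemma Hh_nonneg {m : ℝ} (hm : 0 ≤ m) (k : ℕ) : 0 ≤ Hh m k := by
  apply intervalIntegral.integral_nonneg hm
  intro t ht
  exact mul_nonneg (pow_nonneg ht.1 _) (Real.exp_pos _).le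

lemma Hh_div_le_one {m : ℝ} (hm : 0 ≤ m) (k : ℕ) : Hh m k / k.factorial ≤ 1 := by
  rw [Hh_closed]
  have h1 : 0 ≤ Real.exp (-m) * ∑ j ∈ Finset.range (k+1), m ^ j / j.factorial := by
    apply mul_nonneg (Real.exp_pos _).le
    apply Finset.sum_nonneg
    intro j _
    positivity
  linarith

lemma summable_Aa {ν z2 : ℝ} (hν : 0 < ν) (hz : 0 < z2) : Summable (Aa ν z2) := by
  have hΓ1 : (0:ℝ) < Real.Gamma (ν + 1) := Real.Gamma_pos_of_pos (by positivity)
  apply Summable.of_nonneg_of_le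
    (f := fun k : ℕ => (z2 ^ ν * Real.exp (-z2) / Real.Gamma (ν+1)) * (z2 ^ k / k.factorial))
  · intro k
    have := Real.Gamma_pos_of_pos (show (0:ℝ) < ν + k + 1 by positivity)
    rw [Aa]
    positivity
  · intro k
    rw [Aa, Real.rpow_add hz, Real.rpow_natCast]
    have hΓ : (0:ℝ) < Real.Gamma (ν + k + 1) := Real.Gamma_pos_of_pos (by positivity)
    have hle : (k.factorial : ℝ) * Real.Gamma (ν + 1) ≤ Real.Gamma (ν + k + 1) :=
      gamma_lower ν hν k
    rw [div_le_iff₀ hΓ, show (z2 ^ ν * Real.exp (-z2) / Real.Gamma (ν+1)) * (z2 ^ k / k.factorial)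
        = z2 ^ ν * z2 ^ k * Real.exp (-z2) / ((k.factorial:ℝ) * Real.Gamma (ν+1)) by
      field_simp]
    rw [div_mul_eq_mul_div, le_div_iff₀ (by positivity)]
    have hnn : (0:ℝ) ≤ z2 ^ ν * z2 ^ k * Real.exp (-z2) := by positivity
    calc z2 ^ ν * z2 ^ k * Real.exp (-z2) * ((k.factorial:ℝ) * Real.Gamma (ν+1))
        ≤ z2 ^ ν * z2 ^ k * Real.exp (-z2) * Real.Gamma (ν + k + 1) :=
          mul_le_mul_of_nonneg_left hle hnn
      _ = _ := by ring
  · exact (Real.summable_pow_div_factorial z2).mul_left _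

lemma poisson_tail {m : ℝ} (hm : 0 ≤ m) (i : ℕ) :
    ∑' j : ℕ, (if i < j then Real.exp (-m) * m ^ j / j.factorial else 0)
      = Hh m i / i.factorial := by
  set w : ℕ → ℝ := fun j => Real.exp (-m) * m ^ j / j.factorial with hw
  have hwnn : ∀ j, 0 ≤ w j := by intro j; rw [hw]; positivity
  have hws : Summable w := by
    simp_rw [hw, mul_div_assoc]
    exact (Real.summable_pow_div_factorial m).mul_left _
  have hsum_w : ∑' j, w j = 1 := by
    simp_rw [hw, mul_div_assoc]
    rw [tsum_mul_left, exp_tsum, ← Real.exp_add]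
    simp
  have hs1 : Summable (fun j => if i < j then w j else 0) := by
    apply Summable.of_nonneg_of_le _ _ hws
    · intro j; split <;> simp [hwnn j]
    · intro j; split
      · exact le_refl _
      · exact hwnn j
  have hs2 : Summable (fun j => if j ≤ i then w j else 0) := by
    apply Summable.of_nonneg_of_le _ _ hws
    · intro j; split <;> simp [hwnn j]
    · intro j; split
      · exact le_refl _
      · exact hwnn j
  have hsplit : ∀ j, w j = (if i < j then w j else 0) + (if j ≤ i then w j else 0) := by
    intro j
    by_cases h : i < j
    · rw [if_pos h, if_neg (by omega)]; ring
    · rw [if_neg h, if_pos (by omega)]; ring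
  have h2 : ∑' j, (if j ≤ i then w j else 0)
      = ∑ j ∈ Finset.range (i+1), w j := by
    rw [tsum_eq_sum (s := Finset.range (i+1))]
    · apply Finset.sum_congr rfl
      intro j hj
      rw [if_pos (by simp at hj; omega)]
    · intro j hj
      rw [if_neg (by simp at hj; omega)]
  have h3 : (1:ℝ) = ∑' j, (if i < j then w j else 0) + ∑ j ∈ Finset.range (i+1), w j := by
    rw [← h2, ← Summable.tsum_add hs1 hs2, ← hsum_w]
    exact tsum_congr hsplit
  have h4 : ∑ j ∈ Finset.range (i+1), w j
      = Real.exp (-m) * ∑ j ∈ Finset.range (i+1), m ^ j / j.factorial := by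
    rw [Finset.mul_sum]
    apply Finset.sum_congr rfl
    intro j _
    simp [hw, mul_div_assoc]
  rw [Hh_closed]
  rw [h4] at h3
  linarith

lemma seriesC {ν m z2 : ℝ} (hν : 0 < ν) (hm : 0 ≤ m) (hz : 0 < z2) :
    ∑' k : ℕ, Aa ν z2 k * (Hh m k / k.factorial)
      = Gg ν z2 0 / Real.Gamma ν
        - ∑' j : ℕ, (Real.exp (-m) * m ^ j / j.factorial) * (Gg ν z2 j / Real.Gamma (ν + j)) := by
  set w : ℕ → ℝ := fun j => Real.exp (-m) * m ^ j / j.factorial with hw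
  have hwnn : ∀ j, 0 ≤ w j := by intro j; rw [hw]; positivity
  have hws : Summable w := by
    simp_rw [hw, mul_div_assoc]
    exact (Real.summable_pow_div_factorial m).mul_left _
  have hsum_w : ∑' j, w j = 1 := by
    simp_rw [hw, mul_div_assoc]
    rw [tsum_mul_left, exp_tsum, ← Real.exp_add]
    simp
  have hAnn : ∀ k, 0 ≤ Aa ν z2 k := by
    intro k
    have := Real.Gamma_pos_of_pos (show (0:ℝ) < ν + k + 1 by positivity)
    rw [Aa]; positivity
  have hAs : Summable (Aa ν z2) := summable_Aa hν hz
  set F : ℕ → ℕ → ℝ := fun k j => if k < j then Aa ν z2 k * w j else 0 with hF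
  have hFnn : ∀ k j, 0 ≤ F k j := by
    intro k j; rw [hF]; dsimp only; split
    · exact mul_nonneg (hAnn k) (hwnn j)
    · exact le_refl 0
  have hrow : ∀ k, ∑' j, F k j = Aa ν z2 k * (Hh m k / k.factorial) := by
    intro k
    rw [← poisson_tail hm k, ← tsum_mul_left]
    apply tsum_congr
    intro j
    rw [hF]; dsimp only
    split <;> simp [hw]
  have hrow_s : ∀ k, Summable (fun j => F k j) := by
    intro k
    apply Summable.of_nonneg_of_le (hFnn k) _ (hws.mul_left (Aa ν z2 k))
    intro j
    rw [hF]; dsimp only; split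
    · exact le_refl _
    · exact mul_nonneg (hAnn k) (hwnn j)
  have hsum_rows : Summable (fun k => ∑' j, F k j) := by
    simp_rw [hrow]
    apply Summable.of_nonneg_of_le _ _ hAs
    · intro k
      exact mul_nonneg (hAnn k) (div_nonneg (Hh_nonneg hm k) (by positivity))
    · intro k
      nth_rewrite 2 [show Aa ν z2 k = Aa ν z2 k * 1 by ring]
      exact mul_le_mul_of_nonneg_left (Hh_div_le_one hm k) (hAnn k)
  have hunc : Summable (Function.uncurry F) :=
    (summable_prod_of_nonneg (fun p => hFnn p.1 p.2)).mpr ⟨hrow_s, hsum_rows⟩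
  have hcol_s : ∀ j, Summable (fun k => F k j) := by
    intro j
    apply summable_of_ne_finset_zero (s := Finset.range j)
    intro k hk
    rw [hF]; dsimp only
    rw [if_neg (by simp at hk; omega)]
  have hswap : ∑' k, ∑' j, F k j = ∑' j, ∑' k, F k j :=
    (Summable.tsum_comm' hunc hrow_s hcol_s).symm
  have hcol : ∀ j, ∑' k, F k j = w j * (Gg ν z2 0 / Real.Gamma ν - Gg ν z2 j / Real.Gamma (ν + j)) := by
    intro j
    rw [Gg_telescope hν hz.le j]
    rw [tsum_eq_sum (s := Finset.range j)]
    · rw [Finset.mul_sum]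
      apply Finset.sum_congr rfl
      intro k hk
      rw [hF]; dsimp only
      rw [if_pos (by simp at hk; omega)]
      ring
    · intro k hk
      rw [hF]; dsimp only
      rw [if_neg (by simp at hk; omega)]
  have hterm_s : Summable (fun j => w j * (Gg ν z2 j / Real.Gamma (ν + j))) := by
    apply Summable.of_nonneg_of_le _ _ hws
    · intro j
      have hΓ := Real.Gamma_pos_of_pos (show (0:ℝ) < ν + j by positivity)
      exact mul_nonneg (hwnn j) (div_nonneg (Gg_nonneg hz.le j) hΓ.le)
    · intro j
      have hΓ := Real.Gamma_pos_of_pos (show (0:ℝ) < ν + j by positivity)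
      nth_rewrite 2 [show w j = w j * 1 by ring]
      apply mul_le_mul_of_nonneg_left _ (hwnn j)
      rw [div_le_one hΓ]
      exact Gg_le_Gamma hν hz.le j
  calc ∑' k, Aa ν z2 k * (Hh m k / k.factorial)
      = ∑' k, ∑' j, F k j := by exact (tsum_congr hrow).symm
    _ = ∑' j, ∑' k, F k j := hswap
    _ = ∑' j, (w j * (Gg ν z2 0 / Real.Gamma ν) - w j * (Gg ν z2 j / Real.Gamma (ν + j))) := by
        apply tsum_congr
        intro j
        rw [hcol j]
        ring
    _ = (∑' j, w j * (Gg ν z2 0 / Real.Gamma ν)) - ∑' j, w j * (Gg ν z2 j / Real.Gamma (ν + j)) :=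
        Summable.tsum_sub (hws.mul_right _) hterm_s
    _ = Gg ν z2 0 / Real.Gamma ν - ∑' j, w j * (Gg ν z2 j / Real.Gamma (ν + j)) := by
        rw [tsum_mul_right, hsum_w, one_mul]

lemma comp_mul_left_integral (f : ℝ → ℝ) {c : ℝ} (b : ℝ) (hc : 0 < c) :
    ∫ y in (0:ℝ)..(c*b), f y = c * ∫ t in (0:ℝ)..b, f (c*t) := by
  rw [intervalIntegral.integral_comp_mul_left f hc.ne']
  rw [smul_eq_mul, ← mul_assoc, mul_inv_cancel₀ hc.ne', one_mul, mul_zero]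

lemma intK' {T : ℝ} (m : ℝ) (hT : 0 < T) (k : ℕ) :
    ∫ y in (0:ℝ)..((2*T)*m), y ^ k * Real.exp (-(y/(2*T))) = (2*T)^(k+1) * Hh m k := by
  have hc : (0:ℝ) < 2*T := by positivity
  rw [comp_mul_left_integral _ m hc]
  have h : ∀ t:ℝ, (2*T*t)^k * Real.exp (-((2*T*t)/(2*T))) = (2*T)^k * (t^k * Real.exp (-t)) := by
    intro t
    rw [mul_pow, show (2*T*t)/(2*T) = t by field_simp]
    ring
  simp_rw [h]
  rw [intervalIntegral.integral_const_mul, Hh]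
  ring

lemma intW {s z2 : ℝ} (hs : 0 < s) (hz : 0 ≤ z2) :
    ∫ w in (0:ℝ)..(2*z2), w ^ (s-1) * Real.exp (-(w/2))
      = 2 ^ s * ∫ t in (0:ℝ)..z2, t ^ (s-1) * Real.exp (-t) := by
  rw [comp_mul_left_integral _ z2 (by norm_num : (0:ℝ) < 2)]
  have h : ∀ t:ℝ, (2*t)^(s-1) * Real.exp (-((2*t)/2)) = (2*t)^(s-1) * Real.exp (-t) := by
    intro t
    rw [show (2*t)/2 = t by ring]
  simp_rw [h]
  rw [intervalIntegral.integral_of_le hz, intervalIntegral.integral_of_le hz]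
  rw [setIntegral_congr_fun (measurableSet_Ioc)
    (show Set.EqOn (fun t:ℝ => (2*t)^(s-1) * Real.exp (-t))
        (fun t:ℝ => 2^(s-1) * (t^(s-1) * Real.exp (-t))) (Set.Ioc 0 z2) from by
      intro t ht
      simp only
      rw [Real.mul_rpow (by norm_num) ht.1.le]
      ring)]
  rw [MeasureTheory.integral_const_mul, ← mul_assoc]
  congr 1
  rw [mul_comm, ← Real.rpow_add_one (by norm_num : (2:ℝ) ≠ 0) (s-1)]
  norm_num

lemma besq_series {δ x T : ℝ} (hδ : 2 < δ) (hx : 0 < x) (hT : 0 < T) {y : ℝ} (hy : 0 < y) :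
    y ^ (-(δ/2-1)) * besqDensity δ y T x
      = ∑' k : ℕ, (Real.exp (-(x/(2*T))) * x ^ k /
          ((2*T) ^ (2*(k:ℝ) + (δ/2-1) + 1) * (k.factorial : ℝ) * Real.Gamma ((k:ℝ) + (δ/2-1) + 1)))
          * (y ^ k * Real.exp (-(y/(2*T)))) := by
  set ν : ℝ := δ/2 - 1 with hνdef
  have hν : 0 < ν := by rw [hνdef]; linarith
  have habs : |δ/2 - 1| = ν := abs_of_pos hν
  rw [besqDensity, habs, besselI, ← tsum_mul_left, ← tsum_mul_left]
  apply tsum_congr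
  intro k
  have h2T : (0:ℝ) < 2*T := by positivity
  have hxy : (0:ℝ) < x*y := by positivity
  have hu : (0:ℝ) < Real.sqrt (x*y) / T / 2 := by positivity
  have hyx : (0:ℝ) < y/x := by positivity
  -- rewrite sqrt as rpow and split the powers
  have e1 : Real.sqrt (x*y) / T / 2 = (x*y) ^ ((1:ℝ)/2) / (2*T) := by
    rw [Real.sqrt_eq_rpow]
    field_simp
  have e2 : ((x*y) ^ ((1:ℝ)/2) / (2*T)) ^ (2*(k:ℝ) + ν)
      = (x ^ ((k:ℝ) + ν/2) * y ^ ((k:ℝ) + ν/2)) / (2*T) ^ (2*(k:ℝ) + ν) := by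
    rw [Real.div_rpow (Real.rpow_nonneg hxy.le _) h2T.le,
      ← Real.rpow_mul hxy.le,
      show (1:ℝ)/2 * (2*(k:ℝ) + ν) = (k:ℝ) + ν/2 by ring,
      Real.mul_rpow hx.le hy.le]
  have e4 : (y/x) ^ ((1:ℝ)/2 * ν) = y ^ (ν/2) / x ^ (ν/2) := by
    rw [Real.div_rpow hy.le hx.le, show (1:ℝ)/2 * ν = ν/2 by ring]
  have e5 : Real.exp (-(x+y)/(2*T)) = Real.exp (-(x/(2*T))) * Real.exp (-(y/(2*T))) := by
    rw [← Real.exp_add]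
    congr 1
    field_simp
    ring
  rw [e1, e2, e4, e5]
  -- now collect powers
  have ey : y ^ (-ν) * (y ^ (ν/2) * y ^ ((k:ℝ) + ν/2)) = y ^ k := by
    rw [← Real.rpow_add hy, ← Real.rpow_add hy, ← Real.rpow_natCast y k]
    congr 1
    ring
  have ex : x ^ ((k:ℝ) + ν/2) / x ^ (ν/2) = x ^ k := by
    rw [← Real.rpow_sub hx, ← Real.rpow_natCast x k]
    congr 1
    ring
  have eT : (2*T) ^ (2*(k:ℝ) + ν + 1) = (2*T) ^ (2*(k:ℝ) + ν) * (2*T) := by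
    rw [← Real.rpow_add_one h2T.ne' (2*(k:ℝ) + ν)]
  have hT2 : ((2*T) ^ (2*(k:ℝ) + ν)) ≠ 0 := by
    exact (Real.rpow_pos_of_pos h2T _).ne'
  have hΓ : (0:ℝ) < Real.Gamma ((k:ℝ) + ν + 1) := Real.Gamma_pos_of_pos (by positivity)
  have hfac : (0:ℝ) < (k.factorial : ℝ) := by positivity
  have hxhalf : x ^ (ν/2) ≠ 0 := (Real.rpow_pos_of_pos hx _).ne'
  rw [eT, ← ex, ← ey]
  field_simp

lemma summable_AH {ν m z2 : ℝ} (hν : 0 < ν) (hm : 0 ≤ m) (hz : 0 < z2) :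
    Summable (fun k : ℕ => Aa ν z2 k * (Hh m k / k.factorial)) := by
  have hAnn : ∀ k : ℕ, 0 ≤ Aa ν z2 k := by
    intro k
    have := Real.Gamma_pos_of_pos (show (0:ℝ) < ν + k + 1 by positivity)
    rw [Aa]; positivity
  apply Summable.of_nonneg_of_le _ _ (summable_Aa hν hz)
  · intro k
    exact mul_nonneg (hAnn k) (div_nonneg (Hh_nonneg hm k) (by positivity))
  · intro k
    nth_rewrite 2 [show Aa ν z2 k = Aa ν z2 k * 1 by ring]
    exact mul_le_mul_of_nonneg_left (Hh_div_le_one hm k) (hAnn k)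

lemma ckey {ν x T : ℝ} (hν : 0 < ν) (hx : 0 < x) (hT : 0 < T) (k : ℕ) :
    (Real.exp (-(x/(2*T))) * x ^ k /
        ((2*T) ^ (2*(k:ℝ) + ν + 1) * (k.factorial : ℝ) * Real.Gamma ((k:ℝ) + ν + 1)))
        * (2*T) ^ (k+1)
      = x ^ (-ν) * (Aa ν (x/(2*T)) k / k.factorial) := by
  have h2T : (0:ℝ) < 2*T := by positivity
  have hz : (0:ℝ) < x/(2*T) := by positivity
  have hΓ : (0:ℝ) < Real.Gamma ((k:ℝ) + ν + 1) := Real.Gamma_pos_of_pos (by positivity)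
  have hfac : (0:ℝ) < (k.factorial : ℝ) := by positivity
  rw [Aa, show (ν + (k:ℝ) + 1) = (k:ℝ) + ν + 1 by ring]
  have e1 : (x/(2*T)) ^ (ν + (k:ℝ)) = x ^ (ν + (k:ℝ)) / (2*T) ^ (ν + (k:ℝ)) :=
    Real.div_rpow hx.le h2T.le _
  have e2 : x ^ (-ν) * x ^ (ν + (k:ℝ)) = x ^ k := by
    rw [← Real.rpow_add hx, ← Real.rpow_natCast x k]
    congr 1; ring
  have e3 : (2*T) ^ (2*(k:ℝ) + ν + 1) = (2*T) ^ (ν + (k:ℝ)) * (2*T) ^ (k+1) := by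
    rw [← Real.rpow_natCast (2*T) (k+1), ← Real.rpow_add h2T]
    congr 1; push_cast; ring
  have hne1 : ((2*T):ℝ) ^ (ν + (k:ℝ)) ≠ 0 := (Real.rpow_pos_of_pos h2T _).ne'
  have hne2 : ((2*T):ℝ) ^ (k+1) ≠ 0 := by positivity
  rw [e1, e3, ← e2]
  field_simp

lemma stepA {δ x T K : ℝ} (hδ : 2 < δ) (hx : 0 < x) (hT : 0 < T) (hK : 0 < K) :
    (∫ y in Set.Ioo (0:ℝ) K, y ^ (-(δ/2-1)) * besqDensity δ y T x)
      = x ^ (-(δ/2-1)) *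
          ∑' k : ℕ, Aa (δ/2-1) (x/(2*T)) k * (Hh (K/(2*T)) k / k.factorial) := by
  set ν : ℝ := δ/2 - 1 with hνdef
  have hν : 0 < ν := by rw [hνdef]; linarith
  have h2T : (0:ℝ) < 2*T := by positivity
  set z2 : ℝ := x/(2*T) with hz2def
  set m : ℝ := K/(2*T) with hmdef
  have hz : 0 < z2 := by positivity
  have hm : 0 < m := by positivity
  set c : ℕ → ℝ := fun k => Real.exp (-(x/(2*T))) * x ^ k /
      ((2*T) ^ (2*(k:ℝ) + ν + 1) * (k.factorial : ℝ) * Real.Gamma ((k:ℝ) + ν + 1)) with hcdef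
  have hcnn : ∀ k, 0 ≤ c k := by
    intro k
    have := Real.Gamma_pos_of_pos (show (0:ℝ) < (k:ℝ) + ν + 1 by positivity)
    have := Real.rpow_pos_of_pos h2T (2*(k:ℝ) + ν + 1)
    rw [hcdef]
    positivity
  have hptwise : ∀ y ∈ Set.Ioo (0:ℝ) K, y ^ (-ν) * besqDensity δ y T x
      = ∑' k : ℕ, c k * (y ^ k * Real.exp (-(y/(2*T)))) := by
    intro y hy
    exact besq_series hδ hx hT hy.1
  rw [setIntegral_congr_fun measurableSet_Ioo hptwise]
  -- each term's integral
  have hgcont : ∀ k : ℕ, Continuous (fun y : ℝ => y ^ k * Real.exp (-(y/(2*T)))) := by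
    intro k
    apply Continuous.mul (continuous_pow k)
    exact Real.continuous_exp.comp (by continuity)
  have hint : ∀ k : ℕ, IntegrableOn (fun y : ℝ => c k * (y ^ k * Real.exp (-(y/(2*T)))))
      (Set.Ioo 0 K) := by
    intro k
    apply Integrable.const_mul
    exact (((hgcont k).intervalIntegrable 0 K).1).mono_set Set.Ioo_subset_Ioc_self
  have hval : ∀ k : ℕ, (∫ y in Set.Ioo (0:ℝ) K, c k * (y ^ k * Real.exp (-(y/(2*T)))))
      = x ^ (-ν) * (Aa ν z2 k * (Hh m k / k.factorial)) := by
    intro k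
    rw [MeasureTheory.integral_const_mul]
    rw [← integral_Ioc_eq_integral_Ioo, ← intervalIntegral.integral_of_le hK.le]
    have hKm : (2*T) * m = K := by rw [hmdef]; field_simp
    rw [← hKm, intK' m hT k, ← mul_assoc]
    rw [ckey hν hx hT k]
    ring
  have hsum : Summable (fun k : ℕ => x ^ (-ν) * (Aa ν z2 k * (Hh m k / k.factorial))) :=
    (summable_AH hν hm.le hz).mul_left _
  rw [← MeasureTheory.integral_tsum_of_summable_integral_norm hint]
  · rw [tsum_congr hval, tsum_mul_left]
  · apply Summable.congr hsum
    intro k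
    rw [← hval k]
    apply setIntegral_congr_fun measurableSet_Ioo
    intro y hy
    simp only
    rw [Real.norm_of_nonneg]
    have : (0:ℝ) < y := hy.1
    exact mul_nonneg (hcnn k) (by positivity)

lemma integrableOn_rpow_exp {s B : ℝ} (hs : 0 < s) (hB : 0 ≤ B) :
    IntegrableOn (fun w : ℝ => w ^ (s-1) * Real.exp (-(w/2))) (Set.Ioc 0 B) := by
  have h1 : IntegrableOn (fun w : ℝ => w ^ (s-1)) (Set.Ioc 0 B) :=
    (intervalIntegral.intervalIntegrable_rpow' (r := s - 1) (a := 0) (b := B) (by linarith)).1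
  apply Integrable.mono h1
  · apply ContinuousOn.aestronglyMeasurable _ measurableSet_Ioc
    apply ContinuousOn.mul
    · exact continuousOn_id.rpow_const (fun w hw => Or.inl (ne_of_gt hw.1))
    · exact (Real.continuous_exp.comp (by continuity)).continuousOn
  · filter_upwards [self_mem_ae_restrict measurableSet_Ioc] with w hw
    have hw0 : (0:ℝ) < w := hw.1
    rw [Real.norm_of_nonneg (by positivity), Real.norm_of_nonneg (Real.rpow_nonneg hw0.le _)]
    nth_rewrite 2 [show w ^ (s-1) = w ^ (s-1) * 1 by ring]
    apply mul_le_mul_of_nonneg_left _ (Real.rpow_nonneg hw0.le _)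
    rw [Real.exp_le_one_iff]
    linarith

lemma stepB0 {δ x T : ℝ} (hδ : 2 < δ) (hx : 0 < x) (hT : 0 < T) :
    ncChiSqCDF (x/T) (δ-2) 0 = Gg (δ/2-1) (x/(2*T)) 0 / Real.Gamma (δ/2-1) := by
  set ν : ℝ := δ/2 - 1 with hνdef
  have hν : 0 < ν := by rw [hνdef]; linarith
  have h2T : (0:ℝ) < 2*T := by positivity
  set z2 : ℝ := x/(2*T) with hz2def
  have hz : 0 < z2 := by positivity
  have hpdf : ∀ w : ℝ, ncChiSqPDF (δ-2) 0 w
      = (w ^ (ν-1) * Real.exp (-(w/2))) / (2^ν * Real.Gamma ν) := by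
    intro w
    rw [ncChiSqPDF]
    rw [tsum_eq_single 0 ?_]
    · norm_num
      rw [show (δ-2)/2 - 1 = ν - 1 by rw [hνdef]; ring,
        show (δ-2)/2 = ν by rw [hνdef]; ring,
        show -w/2 = -(w/2) by ring]
    · intro j hj
      rw [zero_div, zero_pow hj]
      ring
  rw [ncChiSqCDF]
  simp_rw [hpdf]
  rw [intervalIntegral.integral_div]
  rw [show x/T = 2*z2 by rw [hz2def]; field_simp]
  rw [intW hν hz.le]
  have hGg : Gg ν z2 0 = ∫ t in (0:ℝ)..z2, t ^ (ν-1) * Real.exp (-t) := by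
    rw [Gg]
    norm_num
  rw [← hGg]
  have h2ν : ((2:ℝ) ^ ν) ≠ 0 := (Real.rpow_pos_of_pos (by norm_num) _).ne'
  rw [mul_comm ((2:ℝ)^ν) (Real.Gamma ν), ← div_div, mul_div_assoc, mul_comm,
    mul_div_assoc, div_self h2ν, mul_one]

lemma summable_wG {ν m z2 : ℝ} (hν : 0 < ν) (hm : 0 ≤ m) (hz : 0 ≤ z2) :
    Summable (fun j : ℕ =>
      (Real.exp (-m) * m ^ j / j.factorial) * (Gg ν z2 j / Real.Gamma (ν + j))) := by
  have hws : Summable (fun j : ℕ => Real.exp (-m) * m ^ j / j.factorial) := by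
    simp_rw [mul_div_assoc]
    exact (Real.summable_pow_div_factorial m).mul_left _
  apply Summable.of_nonneg_of_le _ _ hws
  · intro j
    have hΓ := Real.Gamma_pos_of_pos (show (0:ℝ) < ν + j by positivity)
    have hwj : (0:ℝ) ≤ Real.exp (-m) * m ^ j / j.factorial := by positivity
    exact mul_nonneg hwj (div_nonneg (Gg_nonneg hz j) hΓ.le)
  · intro j
    have hΓ := Real.Gamma_pos_of_pos (show (0:ℝ) < ν + j by positivity)
    have hwj : (0:ℝ) ≤ Real.exp (-m) * m ^ j / j.factorial := by positivity
    nth_rewrite 2 [show Real.exp (-m) * m ^ j / j.factorial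
        = (Real.exp (-m) * m ^ j / j.factorial) * 1 by ring]
    apply mul_le_mul_of_nonneg_left _ hwj
    rw [div_le_one hΓ]
    exact Gg_le_Gamma hν hz j

lemma stepB1 {δ x T K : ℝ} (hδ : 2 < δ) (hx : 0 < x) (hT : 0 < T) (hK : 0 < K) :
    ncChiSqCDF (x/T) (δ-2) (K/T)
      = ∑' j : ℕ, (Real.exp (-(K/(2*T))) * (K/(2*T)) ^ j / j.factorial) *
          (Gg (δ/2-1) (x/(2*T)) j / Real.Gamma ((δ/2-1) + j)) := by
  set ν : ℝ := δ/2 - 1 with hνdef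
  have hν : 0 < ν := by rw [hνdef]; linarith
  have h2T : (0:ℝ) < 2*T := by positivity
  set z2 : ℝ := x/(2*T) with hz2def
  set m : ℝ := K/(2*T) with hmdef
  have hz : 0 < z2 := by positivity
  have hm : 0 < m := by positivity
  set c : ℕ → ℝ := fun j => Real.exp (-m) * m ^ j / (j.factorial : ℝ) /
      (2 ^ (ν + (j:ℝ)) * Real.Gamma (ν + (j:ℝ))) with hcdef
  have hcnn : ∀ j, 0 ≤ c j := by
    intro j
    have h1 := Real.Gamma_pos_of_pos (show (0:ℝ) < ν + j by positivity)
    have h2 := Real.rpow_pos_of_pos (show (0:ℝ) < 2 by norm_num) (ν + (j:ℝ))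
    rw [hcdef]
    positivity
  set F : ℕ → ℝ → ℝ := fun j w => c j * (w ^ (ν + (j:ℝ) - 1) * Real.exp (-(w/2))) with hFdef
  have hpdf : ∀ w : ℝ, ncChiSqPDF (δ-2) (K/T) w = ∑' j, F j w := by
    intro w
    rw [ncChiSqPDF]
    apply tsum_congr
    intro j
    rw [hFdef, hcdef]
    simp only
    rw [show -(K/T)/2 = -m by rw [hmdef]; ring,
      show (K/T)/2 = m by rw [hmdef]; ring,
      show (δ-2)/2 + (j:ℝ) - 1 = ν + (j:ℝ) - 1 by rw [hνdef]; ring,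
      show (δ-2)/2 + (j:ℝ) = ν + (j:ℝ) by rw [hνdef]; ring,
      show -w/2 = -(w/2) by ring]
    ring
  have hxT : x/T = 2*z2 := by rw [hz2def]; field_simp
  rw [ncChiSqCDF, intervalIntegral.integral_of_le (by positivity : (0:ℝ) ≤ x/T)]
  rw [setIntegral_congr_fun measurableSet_Ioc (fun w _ => hpdf w)]
  rw [hxT]
  -- value of each term
  have hval : ∀ j : ℕ, (∫ w in Set.Ioc (0:ℝ) (2*z2), F j w)
      = (Real.exp (-m) * m ^ j / j.factorial) * (Gg ν z2 j / Real.Gamma (ν + j)) := by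
    intro j
    rw [hFdef]
    simp only
    rw [MeasureTheory.integral_const_mul]
    rw [← intervalIntegral.integral_of_le (by positivity : (0:ℝ) ≤ 2*z2)]
    have := intW (s := ν + (j:ℝ)) (by positivity) hz.le
    rw [this]
    rw [hcdef, Gg]
    simp only
    have h1 := (Real.Gamma_pos_of_pos (show (0:ℝ) < ν + j by positivity)).ne'
    have h2 := (Real.rpow_pos_of_pos (show (0:ℝ) < 2 by norm_num) (ν + (j:ℝ))).ne'
    field_simp
  have hintF : ∀ j : ℕ, IntegrableOn (F j) (Set.Ioc 0 (2*z2)) := by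
    intro j
    rw [hFdef]
    apply Integrable.const_mul
    exact integrableOn_rpow_exp (by positivity) (by positivity)
  rw [← MeasureTheory.integral_tsum_of_summable_integral_norm hintF]
  · exact tsum_congr hval
  · apply Summable.congr (summable_wG hν hm.le hz.le)
    intro j
    rw [← hval j]
    apply setIntegral_congr_fun measurableSet_Ioc
    intro w hw
    rw [hFdef]
    simp only
    rw [Real.norm_of_nonneg]
    exact mul_nonneg (hcnn j) (mul_nonneg (Real.rpow_nonneg hw.1.le _) (Real.exp_pos _).le)

/-- For the BESQ density with `δ > 2`, initial value `x` and elapsed transformed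
time `Δφ`, the truncated negative moment satisfies
`∫₀^{K̃} y^{-(δ/2-1)} p_{δ>2}(y,Δφ;x) dy
  = x^{-(δ/2-1)}[χ'²(x/Δφ; δ-2, 0) - χ'²(x/Δφ; δ-2, K̃/Δφ)]`. -/
theorem stmt14 (δ x Δφ Ktilde : ℝ) (hδ : 2 < δ) (hx : 0 < x) (hΔφ : 0 < Δφ)
    (hK : 0 < Ktilde) :
    (∫ y in Set.Ioo (0 : ℝ) Ktilde, y ^ (-(δ / 2 - 1)) * besqDensity δ y Δφ x) =
      x ^ (-(δ / 2 - 1)) *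
        (ncChiSqCDF (x / Δφ) (δ - 2) 0 - ncChiSqCDF (x / Δφ) (δ - 2) (Ktilde / Δφ)) := by
  have hν : 0 < δ/2 - 1 := by linarith
  have hm : (0:ℝ) ≤ Ktilde/(2*Δφ) := by positivity
  have hz : (0:ℝ) < x/(2*Δφ) := by positivity
  rw [stepA hδ hx hΔφ hK, stepB0 hδ hx hΔφ, stepB1 hδ hx hΔφ hK]
  congr 1
  exact seriesC hν hm hz
end
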